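/- arXiv:1312.7412 — 12 statements merged into one kernel-verified Lean document; each statement's English description precedes it below -/
import Mathlib

section
/- Let n ≥ 2, let L ∈ ℝ^{n×n} be the weighted Laplacian of nonnegative weights w_{ij}, and let E, F ∈ ℝ^{n×(n−1)} be the incidence and weighted incidence matrices of the underlying undirected graph. Assume the underlying undirected graph is a spanning tree, i.e., it has n − 1 edges and rank E = n − 1. Then rank F = n − 1 if and only if rank L = n − 1. -/
/-!
An edge `(a, b)` contributes `(w_ab e_a - w_ba e_b)(e_a - e_b)ᵀ` to `F Eᵀ`, whose only
off-diagonal entries are `-w_ab` and `-w_ba`. As every pair of vertices joined by positive weight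
is listed as exactly one edge, `F Eᵀ` and `L` agree off the diagonal; both have zero row sums, so
`L = F Eᵀ`. Since `E` has full column rank, `Eᵀ` is surjective, hence `rank L = rank F`.
-/

open Matrix Finset

theorem Function.Injective.sum_ite_eq {ι α M : Type*} [Fintype ι] [DecidableEq α]
    [AddCommMonoid M] {f : ι → α} (hf : Function.Injective f) {a : α} {c : M}
    (ha : c ≠ 0 → a ∈ Set.range f) :
    ∑ l, (if a = f l then c else 0) = c := by
  obtain rfl | hc := eq_or_ne c 0
  · simp
  obtain ⟨l₀, rfl⟩ := ha hc
  classical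
  simp_rw [hf.eq_iff]
  simp

namespace Matrix

theorem eq_of_mulVec_one_eq_of_offDiag_eq {R n : Type*} [Ring R] [Fintype n] [DecidableEq n]
    {A B : Matrix n n R} (h1 : A *ᵥ 1 = B *ᵥ 1) (hoff : ∀ i j, i ≠ j → A i j = B i j) :
    A = B := by
  ext i j
  obtain rfl | hij := eq_or_ne i j
  · have hdiag : ∀ C : Matrix n n R, C i i = (C *ᵥ 1) i - ∑ k ∈ univ.erase i, C i k :=
      fun C => by
        rw [mulVec, dotProduct, ← add_sum_erase _ _ (mem_univ i)]
        simp
    rw [hdiag A, hdiag B, h1, sum_congr rfl fun k hk => hoff i k (ne_of_mem_erase hk).symm]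
  · exact hoff i j hij

theorem rank_mul_eq_left_of_rank_eq_card {K m n o : Type*} [Field K] [Fintype n] [Fintype o]
    (A : Matrix m n K) (B : Matrix n o K) (hB : B.rank = Fintype.card n) :
    (A * B).rank = A.rank := by
  have hsurj : LinearMap.range B.mulVecLin = ⊤ :=
    Submodule.eq_top_of_finrank_eq (by simpa [rank] using hB)
  rw [rank, mulVecLin_mul, LinearMap.range_comp_of_range_eq_top _ hsurj, rank]

end Matrix

section Incidence

variable {R V ι : Type*} [CommRing R] [DecidableEq V]

variable (R) in
def incidenceMatrix (ed : ι → V × V) : Matrix V ι R := fun i l =>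
  (if i = (ed l).1 then 1 else 0) - (if i = (ed l).2 then 1 else 0)

def weightedIncidenceMatrix (w : V → V → R) (ed : ι → V × V) : Matrix V ι R := fun i l =>
  w (ed l).1 (ed l).2 * (if i = (ed l).1 then 1 else 0)
    - w (ed l).2 (ed l).1 * (if i = (ed l).2 then 1 else 0)

theorem weightedIncidenceMatrix_mul_incidenceMatrix_apply (w : V → V → R) (ed : ι → V × V)
    (l : ι) {i j : V} (hij : i ≠ j) :
    weightedIncidenceMatrix w ed i l * incidenceMatrix R ed j l =
      if s(i, j) = s((ed l).1, (ed l).2) then -w i j else 0 := by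
  simp only [weightedIncidenceMatrix, incidenceMatrix]
  generalize ed l = e
  obtain ⟨a, b⟩ := e
  simp only [Sym2.eq_iff]
  split_ifs <;> grind

variable [Fintype V]

def weightedLaplacian (w : V → V → R) : Matrix V V R := fun i j =>
  if i = j then ∑ k ∈ univ.erase i, w i k else -w i j

theorem weightedLaplacian_mulVec_one (w : V → V → R) : weightedLaplacian w *ᵥ 1 = 0 := by
  ext i
  rw [mulVec, dotProduct, ← add_sum_erase _ _ (mem_univ i),
    sum_congr rfl fun k hk => by rw [weightedLaplacian, if_neg (ne_of_mem_erase hk).symm]]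
  simp [weightedLaplacian]

theorem incidenceMatrix_transpose_mulVec_one (ed : ι → V × V) :
    (incidenceMatrix R ed)ᵀ *ᵥ 1 = 0 := by
  ext l
  simp [incidenceMatrix, mulVec, dotProduct, sum_sub_distrib]

theorem weightedIncidenceMatrix_mul_transpose_incidenceMatrix [PartialOrder R] [IsOrderedRing R]
    [Fintype ι] {w : V → V → R} {ed : ι → V × V} (hw : ∀ i j, 0 ≤ w i j)
    (hinj : Function.Injective fun l => s((ed l).1, (ed l).2))
    (hcover : ∀ i j, i ≠ j → 0 < w i j + w j i → ∃ l, s((ed l).1, (ed l).2) = s(i, j)) :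
    weightedIncidenceMatrix w ed * (incidenceMatrix R ed)ᵀ = weightedLaplacian w := by
  refine eq_of_mulVec_one_eq_of_offDiag_eq ?_ fun i j hij => ?_
  · rw [← mulVec_mulVec, incidenceMatrix_transpose_mulVec_one, mulVec_zero,
      weightedLaplacian_mulVec_one]
  · simp only [mul_apply, transpose_apply,
      weightedIncidenceMatrix_mul_incidenceMatrix_apply _ _ _ hij]
    rw [hinj.sum_ite_eq fun hwij => hcover i j hij ?_, weightedLaplacian, if_neg hij]
    exact add_pos_of_pos_of_nonneg ((hw i j).lt_of_ne (neg_ne_zero.mp hwij).symm) (hw j i)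

end Incidence

theorem weighted_incidence_rank_iff_general
    (n : ℕ)
    (w : Fin n → Fin n → ℝ)
    (hw : ∀ i j, 0 ≤ w i j)
    (L : Matrix (Fin n) (Fin n) ℝ)
    (hL : ∀ i j, L i j =
      if i = j then ∑ l ∈ Finset.univ.erase i, w i l else - w i j)
    -- enumeration of the n - 1 edges of the underlying undirected graph
    (ed : Fin (n-1) → Fin n × Fin n)
    (hcover : ∀ i j : Fin n, i ≠ j → 0 < w i j + w j i →
      ∃ l, ed l = (i, j) ∨ ed l = (j, i))
    (huniq : ∀ l l' : Fin (n-1),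
      (ed l = ed l' ∨ ed l = ((ed l').2, (ed l').1)) → l = l')
    (E : Matrix (Fin n) (Fin (n-1)) ℝ)
    (hE : ∀ i l, E i l =
      (if i = (ed l).1 then (1:ℝ) else 0) - (if i = (ed l).2 then (1:ℝ) else 0))
    (F : Matrix (Fin n) (Fin (n-1)) ℝ)
    (hF : ∀ i l, F i l =
      w (ed l).1 (ed l).2 * (if i = (ed l).1 then (1:ℝ) else 0)
        - w (ed l).2 (ed l).1 * (if i = (ed l).2 then (1:ℝ) else 0))
    -- the underlying undirected graph is a spanning tree
    (hrankE : E.rank = n - 1) :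
    F.rank = n - 1 ↔ L.rank = n - 1 := by
  obtain rfl : L = weightedLaplacian w := Matrix.ext hL
  obtain rfl : E = incidenceMatrix ℝ ed := Matrix.ext hE
  obtain rfl : F = weightedIncidenceMatrix w ed := Matrix.ext hF
  have hinj : Function.Injective fun l => s((ed l).1, (ed l).2) :=
    fun l l' h => huniq l l' (Sym2.mk_eq_mk_iff.mp h)
  have hcover' : ∀ i j, i ≠ j → 0 < w i j + w j i → ∃ l, s((ed l).1, (ed l).2) = s(i, j) :=
    fun i j hij hpos => (hcover i j hij hpos).imp fun l hl => by
      rcases hl with hl | hl <;> simp [hl, Sym2.eq_swap]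
  rw [← weightedIncidenceMatrix_mul_transpose_incidenceMatrix hw hinj hcover',
    rank_mul_eq_left_of_rank_eq_card _ _ (by rw [rank_transpose, hrankE, Fintype.card_fin])]

/-- for a weighted Laplacian whose underlying undirected graph is a
spanning tree (so it has `n - 1` edges and `rank E = n - 1`), the weighted incidence
matrix `F` has rank `n - 1` if and only if `rank L = n - 1`. -/
theorem weighted_incidence_rank_iff
    (n : ℕ) (hn : 2 ≤ n)
    (w : Fin n → Fin n → ℝ)
    (hw : ∀ i j, 0 ≤ w i j) (hwdiag : ∀ i, w i i = 0)
    (L : Matrix (Fin n) (Fin n) ℝ)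
    (hL : ∀ i j, L i j =
      if i = j then ∑ l ∈ Finset.univ.erase i, w i l else - w i j)
    -- enumeration of the n - 1 edges of the underlying undirected graph
    (ed : Fin (n-1) → Fin n × Fin n)
    (hloop : ∀ l, (ed l).1 ≠ (ed l).2)
    (hedge : ∀ l, 0 < w (ed l).1 (ed l).2 + w (ed l).2 (ed l).1)
    (hcover : ∀ i j : Fin n, i ≠ j → 0 < w i j + w j i →
      ∃ l, ed l = (i, j) ∨ ed l = (j, i))
    (huniq : ∀ l l' : Fin (n-1),
      (ed l = ed l' ∨ ed l = ((ed l').2, (ed l').1)) → l = l')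
    (E : Matrix (Fin n) (Fin (n-1)) ℝ)
    (hE : ∀ i l, E i l =
      (if i = (ed l).1 then (1:ℝ) else 0) - (if i = (ed l).2 then (1:ℝ) else 0))
    (F : Matrix (Fin n) (Fin (n-1)) ℝ)
    (hF : ∀ i l, F i l =
      w (ed l).1 (ed l).2 * (if i = (ed l).1 then (1:ℝ) else 0)
        - w (ed l).2 (ed l).1 * (if i = (ed l).2 then (1:ℝ) else 0))
    -- the underlying undirected graph is a spanning tree
    (hrankE : E.rank = n - 1) :
    F.rank = n - 1 ↔ L.rank = n - 1 :=
  weighted_incidence_rank_iff_general n w hw L hL ed hcover huniq E hE F hF hrankE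
end

section
/- Let n ≥ 2, let E ∈ ℝ^{n×(n−1)} satisfy Eᵀ𝟙 = 0 and rank E = n − 1, let F ∈ ℝ^{n×(n−1)} be such that EᵀF is invertible, and let ν ∈ ℝ^n satisfy νᵀ(FEᵀ) = 0 and νᵀ𝟙 = 1. Then the matrix T ∈ ℝ^{n×n} whose first row is νᵀ and whose remaining n−1 rows form Eᵀ is invertible, its inverse is the matrix whose first column is 𝟙 and whose remaining columns form F(EᵀF)^{−1}, and T (FEᵀ) T^{−1} is the block-diagonal matrix diag(0, EᵀF) (a zero scalar block followed by the (n−1)×(n−1) block EᵀF). -/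
/-!
Since `EᵀF` is invertible, `νᵀ F = νᵀ F (EᵀF) (EᵀF)⁻¹ = νᵀ (FEᵀ) F (EᵀF)⁻¹ = 0`. Together with
`Eᵀ 𝟙 = 0`, `νᵀ 𝟙 = 1` and `Eᵀ F (EᵀF)⁻¹ = 1`, this makes the block product `T T⁻¹` the identity,
and the same relations reduce `FEᵀ T⁻¹` to the block row `[0 | F]`, whence the block-diagonal
form. Since `T` is square, the left inverse is also a right inverse.
-/

open Matrix

section LaplacianBlocks

variable {n m R : Type*} [Fintype n] [CommRing R] {E F : Matrix n m R} {ν : n → R}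

theorem transpose_mul_replicateCol_one (hE1 : Eᵀ *ᵥ 1 = 0) :
    Eᵀ * replicateCol (Fin 1) (1 : n → R) = 0 := by
  rw [← replicateCol_mulVec, hE1, replicateCol_zero]

theorem replicateRow_mul_replicateCol_one (hν1 : ν ⬝ᵥ 1 = 1) :
    replicateRow (Fin 1) ν * replicateCol (Fin 1) (1 : n → R) = 1 := by
  ext i j
  rw [replicateRow_mul_replicateCol_apply, hν1, Subsingleton.elim i j, one_apply_eq]

variable [Fintype m] [DecidableEq m]

theorem vecMul_eq_zero_of_vecMul_mul_transpose_eq_zero (hinv : IsUnit (Eᵀ * F).det)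
    (hν : ν ᵥ* (F * Eᵀ) = 0) : ν ᵥ* F = 0 :=
  calc ν ᵥ* F = ν ᵥ* F ᵥ* ((Eᵀ * F) * (Eᵀ * F)⁻¹) := by rw [mul_nonsing_inv _ hinv, vecMul_one]
    _ = ν ᵥ* (F * Eᵀ) ᵥ* F ᵥ* (Eᵀ * F)⁻¹ := by simp only [vecMul_vecMul, Matrix.mul_assoc]
    _ = 0 := by rw [hν, zero_vecMul, zero_vecMul]

theorem transpose_mul_mul_nonsing_inv (hinv : IsUnit (Eᵀ * F).det) :
    Eᵀ * (F * (Eᵀ * F)⁻¹) = 1 := by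
  rw [← Matrix.mul_assoc, mul_nonsing_inv _ hinv]

theorem fromRows_mul_fromCols_eq_one (hE1 : Eᵀ *ᵥ 1 = 0) (hinv : IsUnit (Eᵀ * F).det)
    (hν : ν ᵥ* (F * Eᵀ) = 0) (hν1 : ν ⬝ᵥ 1 = 1) :
    fromRows (replicateRow (Fin 1) ν) Eᵀ * fromCols (replicateCol (Fin 1) 1) (F * (Eᵀ * F)⁻¹)
      = 1 := by
  have hνF : replicateRow (Fin 1) ν * (F * (Eᵀ * F)⁻¹) = 0 := by
    rw [← Matrix.mul_assoc, ← replicateRow_vecMul,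
      vecMul_eq_zero_of_vecMul_mul_transpose_eq_zero hinv hν, replicateRow_zero, Matrix.zero_mul]
  rw [fromRows_mul_fromCols, replicateRow_mul_replicateCol_one hν1, hνF,
    transpose_mul_replicateCol_one hE1, transpose_mul_mul_nonsing_inv hinv, fromBlocks_one]

theorem fromRows_mul_mul_fromCols_eq_fromBlocks (hE1 : Eᵀ *ᵥ 1 = 0)
    (hinv : IsUnit (Eᵀ * F).det) (hν : ν ᵥ* (F * Eᵀ) = 0) :
    fromRows (replicateRow (Fin 1) ν) Eᵀ * (F * Eᵀ) *
        fromCols (replicateCol (Fin 1) 1) (F * (Eᵀ * F)⁻¹) = fromBlocks 0 0 0 (Eᵀ * F) := by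
  have hcols : F * Eᵀ * fromCols (replicateCol (Fin 1) 1) (F * (Eᵀ * F)⁻¹) = fromCols 0 F := by
    rw [Matrix.mul_assoc, mul_fromCols, transpose_mul_replicateCol_one hE1,
      transpose_mul_mul_nonsing_inv hinv, mul_fromCols, Matrix.mul_zero, Matrix.mul_one]
  have hνF : replicateRow (Fin 1) ν * F = 0 := by
    rw [← replicateRow_vecMul, vecMul_eq_zero_of_vecMul_mul_transpose_eq_zero hinv hν,
      replicateRow_zero]
  rw [Matrix.mul_assoc, hcols, fromRows_mul_fromCols, hνF, Matrix.mul_zero, Matrix.mul_zero]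

end LaplacianBlocks

theorem laplacian_block_diagonalization_general
    (n : ℕ) (hn : 2 ≤ n)
    (E F : Matrix (Fin n) (Fin (n-1)) ℝ)
    (hE1 : Eᵀ *ᵥ (fun _ => (1:ℝ)) = 0)
    (hinv : IsUnit (Eᵀ * F).det)
    (ν : Fin n → ℝ)
    (hν : ν ᵥ* (F * Eᵀ) = 0)
    (hν1 : ν ⬝ᵥ (fun _ => (1:ℝ)) = 1)
    (T : Matrix (Fin 1 ⊕ Fin (n-1)) (Fin n) ℝ)
    (hT : T = Matrix.fromRows (Matrix.of fun (_ : Fin 1) j => ν j) Eᵀ)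
    (Tinv : Matrix (Fin n) (Fin 1 ⊕ Fin (n-1)) ℝ)
    (hTinv : Tinv = Matrix.fromCols
      (Matrix.of fun (_ : Fin n) (_ : Fin 1) => (1:ℝ)) (F * (Eᵀ * F)⁻¹)) :
    T * Tinv = 1 ∧ Tinv * T = 1 ∧
    T * (F * Eᵀ) * Tinv = Matrix.fromBlocks 0 0 0 (Eᵀ * F) := by
  subst hT hTinv
  have hcard : Fintype.card (Fin 1 ⊕ Fin (n-1)) = Fintype.card (Fin n) := by
    simp only [Fintype.card_sum, Fintype.card_fin]
    omega
  have hleft := fromRows_mul_fromCols_eq_one hE1 hinv hν hν1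
  exact ⟨hleft, (mul_eq_one_comm_of_card_eq _ _ ℝ hcard).mp hleft,
    fromRows_mul_mul_fromCols_eq_fromBlocks hE1 hinv hν⟩

/-- the matrix `T` with first row `νᵀ` and remaining rows `Eᵀ` is invertible
with inverse the matrix with first column `𝟙` and remaining columns `F (EᵀF)⁻¹`, and
`T (F Eᵀ) T⁻¹` is the block-diagonal matrix `diag(0, EᵀF)`. -/
theorem laplacian_block_diagonalization
    (n : ℕ) (hn : 2 ≤ n)
    (E F : Matrix (Fin n) (Fin (n-1)) ℝ)
    (hE1 : Eᵀ *ᵥ (fun _ => (1:ℝ)) = 0)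
    (hrankE : E.rank = n - 1)
    (hinv : IsUnit (Eᵀ * F).det)
    (ν : Fin n → ℝ)
    (hν : ν ᵥ* (F * Eᵀ) = 0)
    (hν1 : ν ⬝ᵥ (fun _ => (1:ℝ)) = 1)
    (T : Matrix (Fin 1 ⊕ Fin (n-1)) (Fin n) ℝ)
    (hT : T = Matrix.fromRows (Matrix.of fun (_ : Fin 1) j => ν j) Eᵀ)
    (Tinv : Matrix (Fin n) (Fin 1 ⊕ Fin (n-1)) ℝ)
    (hTinv : Tinv = Matrix.fromCols
      (Matrix.of fun (_ : Fin n) (_ : Fin 1) => (1:ℝ)) (F * (Eᵀ * F)⁻¹)) :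
    T * Tinv = 1 ∧ Tinv * T = 1 ∧
    T * (F * Eᵀ) * Tinv = Matrix.fromBlocks 0 0 0 (Eᵀ * F) :=
  laplacian_block_diagonalization_general n hn E F hE1 hinv ν hν hν1 T hT Tinv hTinv
end

section
/- Let n ≥ 2, let E, F ∈ ℝ^{n×m}, set L = FEᵀ and L_e = EᵀF, and let A ∈ ℝ^{k×k}, B ∈ ℝ^{k×p}, C ∈ ℝ^{p×k}, G ∈ ℝ^{n×q}. Suppose x : ℝ → ℝ^{nk} and u : ℝ → ℝ^{q} are such that x is differentiable and ẋ(t) = (I_n ⊗ A − L ⊗ BC) x(t) + (G ⊗ B) u(t) for all t. Then x_e := (Eᵀ ⊗ I_k) x is differentiable and satisfies the edge dynamics ẋ_e(t) = (I_m ⊗ A − L_e ⊗ BC) x_e(t) + (EᵀG ⊗ B) u(t) for all t. -/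
/-!
Since `Eᵀ (F Eᵀ) = (Eᵀ F) Eᵀ`, the matrix `Eᵀ ⊗ I` intertwines the node matrix `I ⊗ A - L ⊗ BC`
with the edge matrix `I ⊗ A - L_e ⊗ BC`; a constant linear map that intertwines two linear
systems carries trajectories of the first to trajectories of the second.
-/

open Matrix Kronecker

section

variable {𝕜 : Type*} [NontriviallyNormedField 𝕜] [CompleteSpace 𝕜]
  {ι κ : Type*} [Fintype ι] [Fintype κ]

theorem HasDerivAt.matrix_mulVec (M : Matrix κ ι 𝕜) {x : 𝕜 → ι → 𝕜} {v : ι → 𝕜} {t : 𝕜}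
    (hx : HasDerivAt x v t) : HasDerivAt (fun s => M *ᵥ x s) (M *ᵥ v) t :=
  (LinearMap.toContinuousLinearMap (mulVecLin M)).hasFDerivAt.comp_hasDerivAt t hx

theorem HasDerivAt.mulVec_of_mul_eq_mul {P : Matrix κ ι 𝕜} {M : Matrix ι ι 𝕜}
    {M' : Matrix κ κ 𝕜} (hPM : M' * P = P * M) {x : 𝕜 → ι → 𝕜} {v : ι → 𝕜} {t : 𝕜}
    (hx : HasDerivAt x (M *ᵥ x t + v) t) :
    HasDerivAt (fun s => P *ᵥ x s) (M' *ᵥ (P *ᵥ x t) + P *ᵥ v) t := by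
  convert hx.matrix_mulVec P using 1
  rw [mulVec_add, mulVec_mulVec, hPM, mulVec_mulVec]

end

theorem one_kronecker_sub_mul_kronecker_one {R : Type*} [CommRing R]
    {l n k : Type*} [Fintype l] [Fintype n] [Fintype k] [DecidableEq l] [DecidableEq n]
    [DecidableEq k] (P : Matrix l n R) (Q : Matrix n l R) (A K : Matrix k k R) :
    ((1 : Matrix l l R) ⊗ₖ A - (P * Q) ⊗ₖ K) * (P ⊗ₖ (1 : Matrix k k R)) =
      (P ⊗ₖ (1 : Matrix k k R)) * ((1 : Matrix n n R) ⊗ₖ A - (Q * P) ⊗ₖ K) := by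
  simp only [Matrix.sub_mul, Matrix.mul_sub, ← mul_kronecker_mul, Matrix.one_mul,
    Matrix.mul_one, Matrix.mul_assoc]

theorem edge_dynamics_general
    (n m k p q : ℕ)
    (E F : Matrix (Fin n) (Fin m) ℝ)
    (L : Matrix (Fin n) (Fin n) ℝ) (hL : L = F * Eᵀ)
    (Le : Matrix (Fin m) (Fin m) ℝ) (hLe : Le = Eᵀ * F)
    (A : Matrix (Fin k) (Fin k) ℝ) (B : Matrix (Fin k) (Fin p) ℝ)
    (C : Matrix (Fin p) (Fin k) ℝ) (G : Matrix (Fin n) (Fin q) ℝ)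
    (x : ℝ → (Fin n × Fin k) → ℝ) (u : ℝ → (Fin q × Fin p) → ℝ)
    (hx : ∀ t : ℝ, HasDerivAt x
      ((((1 : Matrix (Fin n) (Fin n) ℝ) ⊗ₖ A - L ⊗ₖ (B * C)) *ᵥ x t)
        + (G ⊗ₖ B) *ᵥ u t) t) :
    ∀ t : ℝ, HasDerivAt (fun s => (Eᵀ ⊗ₖ (1 : Matrix (Fin k) (Fin k) ℝ)) *ᵥ x s)
      ((((1 : Matrix (Fin m) (Fin m) ℝ) ⊗ₖ A - Le ⊗ₖ (B * C)) *ᵥ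
          ((Eᵀ ⊗ₖ (1 : Matrix (Fin k) (Fin k) ℝ)) *ᵥ x t))
        + ((Eᵀ * G) ⊗ₖ B) *ᵥ u t) t := by
  intro t
  subst hL hLe
  have hinput : (Eᵀ * G) ⊗ₖ B = (Eᵀ ⊗ₖ (1 : Matrix (Fin k) (Fin k) ℝ)) * (G ⊗ₖ B) := by
    rw [← mul_kronecker_mul, Matrix.one_mul]
  rw [hinput, ← mulVec_mulVec]
  exact (hx t).mulVec_of_mul_eq_mul (one_kronecker_sub_mul_kronecker_one Eᵀ F A (B * C))

/-- if `x` satisfies the networked dynamics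
`ẋ = (I ⊗ A - L ⊗ BC) x + (G ⊗ B) u` with `L = F Eᵀ`, then the edge state
`x_e = (Eᵀ ⊗ I) x` satisfies the edge dynamics
`ẋ_e = (I ⊗ A - L_e ⊗ BC) x_e + (EᵀG ⊗ B) u` with `L_e = Eᵀ F`. -/
theorem edge_dynamics
    (n m k p q : ℕ) (hn : 2 ≤ n)
    (E F : Matrix (Fin n) (Fin m) ℝ)
    (L : Matrix (Fin n) (Fin n) ℝ) (hL : L = F * Eᵀ)
    (Le : Matrix (Fin m) (Fin m) ℝ) (hLe : Le = Eᵀ * F)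
    (A : Matrix (Fin k) (Fin k) ℝ) (B : Matrix (Fin k) (Fin p) ℝ)
    (C : Matrix (Fin p) (Fin k) ℝ) (G : Matrix (Fin n) (Fin q) ℝ)
    (x : ℝ → (Fin n × Fin k) → ℝ) (u : ℝ → (Fin q × Fin p) → ℝ)
    (hx : ∀ t : ℝ, HasDerivAt x
      ((((1 : Matrix (Fin n) (Fin n) ℝ) ⊗ₖ A - L ⊗ₖ (B * C)) *ᵥ x t)
        + (G ⊗ₖ B) *ᵥ u t) t) :
    ∀ t : ℝ, HasDerivAt (fun s => (Eᵀ ⊗ₖ (1 : Matrix (Fin k) (Fin k) ℝ)) *ᵥ x s)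
      ((((1 : Matrix (Fin m) (Fin m) ℝ) ⊗ₖ A - Le ⊗ₖ (B * C)) *ᵥ
          ((Eᵀ ⊗ₖ (1 : Matrix (Fin k) (Fin k) ℝ)) *ᵥ x t))
        + ((Eᵀ * G) ⊗ₖ B) *ᵥ u t) t :=
  edge_dynamics_general n m k p q E F L hL Le hLe A B C G x u hx
end

section
/- Let Q ∈ ℝ^{k×k} be symmetric positive definite, J ∈ ℝ^{k×k} skew-symmetric, R ∈ ℝ^{k×k} symmetric positive semidefinite, B ∈ ℝ^{k×m₀}; set A = (J − R)Q and C = BᵀQ. Let L_e ∈ ℝ^{q×q} and K ∈ ℝ^{q×q} be arbitrary. Then (I_q ⊗ A − L_e ⊗ BC)ᵀ (K ⊗ Q) + (K ⊗ Q)(I_q ⊗ A − L_e ⊗ BC) = −2 K ⊗ (QRQ) − (L_eᵀK + K L_e) ⊗ (CᵀC). -/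
/-! By the mixed-product rule the left side is `K ⊗ (AᵀQ + QA) - LeᵀK ⊗ (BC)ᵀQ - K Le ⊗ Q(BC)`.
In `AᵀQ + QA = Q(-J - R)Q + Q(J - R)Q` the skew part `J` cancels, and since `Q` is symmetric
both coupling blocks equal `CᵀC`. -/

open Matrix Kronecker

section

variable {n m ι α : Type*} [Fintype n] [Fintype m] [Fintype ι] [DecidableEq ι] [CommRing α]

theorem Matrix.transpose_mul_add_mul_of_eq_skew_sub_symm_mul {A J R Q : Matrix n n α}
    (hQ : Qᵀ = Q) (hJ : Jᵀ = -J) (hR : Rᵀ = R) (hA : A = (J - R) * Q) :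
    Aᵀ * Q + Q * A = (-2 : α) • (Q * R * Q) := by
  have hAT : Aᵀ = Q * (-J - R) := by
    rw [hA, transpose_mul, transpose_sub, hJ, hR, hQ]
  rw [hAT, hA, neg_smul, two_smul]
  noncomm_ring

theorem Matrix.mul_mul_eq_transpose_mul_of_eq_transpose_mul {Q : Matrix n n α}
    {B : Matrix n m α} {C : Matrix m n α} (hQ : Qᵀ = Q) (hC : C = Bᵀ * Q) :
    Q * (B * C) = Cᵀ * C := by
  rw [hC, transpose_mul, hQ, transpose_transpose, Matrix.mul_assoc]

theorem Matrix.transpose_mul_add_mul_one_kronecker_sub_kronecker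
    (A N Q : Matrix n n α) (L K : Matrix ι ι α) :
    (1 ⊗ₖ A - L ⊗ₖ N)ᵀ * (K ⊗ₖ Q) + (K ⊗ₖ Q) * (1 ⊗ₖ A - L ⊗ₖ N)
      = K ⊗ₖ (Aᵀ * Q + Q * A) - (Lᵀ * K) ⊗ₖ (Nᵀ * Q) - (K * L) ⊗ₖ (Q * N) := by
  rw [transpose_sub, ← kroneckerMap_transpose, ← kroneckerMap_transpose, transpose_one,
    sub_mul, mul_sub, ← mul_kronecker_mul, ← mul_kronecker_mul, ← mul_kronecker_mul,
    ← mul_kronecker_mul, one_mul, mul_one, kronecker_add]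
  abel

end

theorem lyapunov_identity_general
    (k m₀ q : ℕ)
    (Q J R : Matrix (Fin k) (Fin k) ℝ) (B : Matrix (Fin k) (Fin m₀) ℝ)
    (hQsymm : Qᵀ = Q)
    (hJ : Jᵀ = -J) (hR : R.PosSemidef)
    (A : Matrix (Fin k) (Fin k) ℝ) (hA : A = (J - R) * Q)
    (C : Matrix (Fin m₀) (Fin k) ℝ) (hC : C = Bᵀ * Q)
    (Le K : Matrix (Fin q) (Fin q) ℝ) :
    ((1 : Matrix (Fin q) (Fin q) ℝ) ⊗ₖ A - Le ⊗ₖ (B * C))ᵀ * (K ⊗ₖ Q)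
      + (K ⊗ₖ Q) * ((1 : Matrix (Fin q) (Fin q) ℝ) ⊗ₖ A - Le ⊗ₖ (B * C))
    = (-2 : ℝ) • (K ⊗ₖ (Q * R * Q)) - (Leᵀ * K + K * Le) ⊗ₖ (Cᵀ * C) := by
  have hBCQ : (B * C)ᵀ * Q = Cᵀ * C := by
    rw [transpose_mul, Matrix.mul_assoc, ← hC]
  rw [transpose_mul_add_mul_one_kronecker_sub_kronecker,
    transpose_mul_add_mul_of_eq_skew_sub_symm_mul hQsymm hJ
      (isHermitian_iff_isSymm.1 hR.1).eq hA,
    hBCQ, mul_mul_eq_transpose_mul_of_eq_transpose_mul hQsymm hC,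
    kronecker_smul, add_kronecker]
  abel

/-- the key Lyapunov identity for port-Hamiltonian subsystems:
`(I ⊗ A - L_e ⊗ BC)ᵀ (K ⊗ Q) + (K ⊗ Q)(I ⊗ A - L_e ⊗ BC)
  = -2 K ⊗ (QRQ) - (L_eᵀK + K L_e) ⊗ (CᵀC)`. -/
theorem lyapunov_identity
    (k m₀ q : ℕ)
    (Q J R : Matrix (Fin k) (Fin k) ℝ) (B : Matrix (Fin k) (Fin m₀) ℝ)
    (hQ : Q.PosDef) (hQsymm : Qᵀ = Q)
    (hJ : Jᵀ = -J) (hR : R.PosSemidef)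
    (A : Matrix (Fin k) (Fin k) ℝ) (hA : A = (J - R) * Q)
    (C : Matrix (Fin m₀) (Fin k) ℝ) (hC : C = Bᵀ * Q)
    (Le K : Matrix (Fin q) (Fin q) ℝ) :
    ((1 : Matrix (Fin q) (Fin q) ℝ) ⊗ₖ A - Le ⊗ₖ (B * C))ᵀ * (K ⊗ₖ Q)
      + (K ⊗ₖ Q) * ((1 : Matrix (Fin q) (Fin q) ℝ) ⊗ₖ A - Le ⊗ₖ (B * C))
    = (-2 : ℝ) • (K ⊗ₖ (Q * R * Q)) - (Leᵀ * K + K * Le) ⊗ₖ (Cᵀ * C) :=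
  lyapunov_identity_general k m₀ q Q J R B hQsymm hJ hR A hA C hC Le K
end

section
/- Let Q ∈ ℝ^{k×k} be symmetric positive definite, J ∈ ℝ^{k×k} skew-symmetric, R ∈ ℝ^{k×k} symmetric positive semidefinite, B ∈ ℝ^{k×m₀}; set A = (J − R)Q and C = BᵀQ. Let L_e ∈ ℝ^{q×q}, G_e ∈ ℝ^{q×r}, and Π ∈ ℝ^{q×q} be arbitrary. Then (I_q ⊗ A − L_e ⊗ BC)(Π ⊗ Q^{−1}) + (Π ⊗ Q^{−1})(I_q ⊗ A − L_e ⊗ BC)ᵀ + (G_e ⊗ B)(G_e ⊗ B)ᵀ = −2(Π ⊗ R) − (L_eΠ + ΠL_eᵀ − G_eG_eᵀ) ⊗ (BBᵀ). -/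
open Matrix Kronecker

/-!
By the mixed-product rule, the Lyapunov operator of `I ⊗ A - L_e ⊗ BC` at `Π ⊗ Q⁻¹` splits into
`Π ⊗ (A Q⁻¹ + Q⁻¹ Aᵀ) - (L_e Π + Π L_eᵀ) ⊗ (BC Q⁻¹)`, provided `BC Q⁻¹ = Q⁻¹ (BC)ᵀ`.
Since `Q` is symmetric, `K Q Q⁻¹ = K` and `Q⁻¹ (K Q)ᵀ = Kᵀ` for every `K`; with `K = J - R` this
gives `A Q⁻¹ + Q⁻¹ Aᵀ = (J - R) + (J - R)ᵀ = -2R`, and with `K = BBᵀ` both `BC Q⁻¹` and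
`Q⁻¹ (BC)ᵀ` equal `BBᵀ`.
-/

namespace Matrix

variable {α l m n p : Type*}

def lyapunov [Fintype n] [Mul α] [AddCommMonoid α] (A X : Matrix n n α) : Matrix n n α :=
  A * X + X * Aᵀ

theorem sub_kronecker [NonUnitalNonAssocRing α] (A₁ A₂ : Matrix l m α) (B : Matrix n p α) :
    (A₁ - A₂) ⊗ₖ B = A₁ ⊗ₖ B - A₂ ⊗ₖ B := by
  ext
  simp [sub_mul]

theorem kronecker_mul_transpose_kronecker [CommSemiring α] [Fintype m] [Fintype p]
    (A : Matrix l m α) (B : Matrix n p α) :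
    (A ⊗ₖ B) * (A ⊗ₖ B)ᵀ = (A * Aᵀ) ⊗ₖ (B * Bᵀ) := by
  rw [← kroneckerMap_transpose, mul_kronecker_mul]

theorem lyapunov_one_kronecker_sub_kronecker [CommRing α] [Fintype m] [DecidableEq m]
    [Fintype n] (A M X : Matrix n n α) (L P : Matrix m m α) (hMX : M * X = X * Mᵀ) :
    lyapunov ((1 : Matrix m m α) ⊗ₖ A - L ⊗ₖ M) (P ⊗ₖ X)
      = P ⊗ₖ lyapunov A X - (L * P + P * Lᵀ) ⊗ₖ (M * X) := by
  simp only [lyapunov, sub_mul, mul_sub, transpose_sub, ← kroneckerMap_transpose,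
    ← mul_kronecker_mul, one_mul, transpose_one, mul_one, kronecker_add, add_kronecker, hMX]
  abel

variable [CommRing α] [Fintype n] [DecidableEq n] {Q : Matrix n n α}

theorem inv_mul_transpose_mul_of_transpose_eq (hQ : IsUnit Q.det) (hQT : Qᵀ = Q)
    (K : Matrix m n α) : Q⁻¹ * (K * Q)ᵀ = Kᵀ := by
  rw [transpose_mul, hQT, nonsing_inv_mul_cancel_left _ _ hQ]

theorem lyapunov_mul_inv_of_transpose_eq (hQ : IsUnit Q.det) (hQT : Qᵀ = Q)
    (K : Matrix n n α) : lyapunov (K * Q) Q⁻¹ = K + Kᵀ := by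
  rw [lyapunov, mul_nonsing_inv_cancel_right _ _ hQ, inv_mul_transpose_mul_of_transpose_eq hQ hQT]

end Matrix

/-- the key Gramian identity for port-Hamiltonian subsystems:
`(I ⊗ A - L_e ⊗ BC)(Π ⊗ Q⁻¹) + (Π ⊗ Q⁻¹)(I ⊗ A - L_e ⊗ BC)ᵀ + (G_e ⊗ B)(G_e ⊗ B)ᵀ
  = -2(Π ⊗ R) - (L_eΠ + ΠL_eᵀ - G_eG_eᵀ) ⊗ (BBᵀ)`. -/
theorem gramian_identity
    (k m₀ q r : ℕ)
    (Q J R : Matrix (Fin k) (Fin k) ℝ) (B : Matrix (Fin k) (Fin m₀) ℝ)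
    (hQ : Q.PosDef) (hQsymm : Qᵀ = Q)
    (hJ : Jᵀ = -J) (hR : R.PosSemidef)
    (A : Matrix (Fin k) (Fin k) ℝ) (hA : A = (J - R) * Q)
    (C : Matrix (Fin m₀) (Fin k) ℝ) (hC : C = Bᵀ * Q)
    (Le : Matrix (Fin q) (Fin q) ℝ) (Ge : Matrix (Fin q) (Fin r) ℝ)
    (Pc : Matrix (Fin q) (Fin q) ℝ) :
    ((1 : Matrix (Fin q) (Fin q) ℝ) ⊗ₖ A - Le ⊗ₖ (B * C)) * (Pc ⊗ₖ Q⁻¹)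
      + (Pc ⊗ₖ Q⁻¹) * ((1 : Matrix (Fin q) (Fin q) ℝ) ⊗ₖ A - Le ⊗ₖ (B * C))ᵀ
      + (Ge ⊗ₖ B) * (Ge ⊗ₖ B)ᵀ
    = (-2 : ℝ) • (Pc ⊗ₖ R) - (Le * Pc + Pc * Leᵀ - Ge * Geᵀ) ⊗ₖ (B * Bᵀ) := by
  have hdet : IsUnit Q.det := hQ.det_pos.ne'.isUnit
  have hBC : B * C = B * Bᵀ * Q := by rw [hC, Matrix.mul_assoc]
  have hBCQ : B * C * Q⁻¹ = B * Bᵀ := by rw [hBC, mul_nonsing_inv_cancel_right _ _ hdet]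
  have hQBC : Q⁻¹ * (B * C)ᵀ = B * Bᵀ := by
    rw [hBC, inv_mul_transpose_mul_of_transpose_eq hdet hQsymm, transpose_mul, transpose_transpose]
  have hAQ : lyapunov A Q⁻¹ = (-2 : ℝ) • R := by
    rw [hA, lyapunov_mul_inv_of_transpose_eq hdet hQsymm, transpose_sub, hJ,
      ← conjTranspose_eq_transpose_of_trivial, hR.1]
    module
  change lyapunov _ _ + _ = _
  rw [lyapunov_one_kronecker_sub_kronecker _ _ _ _ _ (hBCQ.trans hQBC.symm), hAQ, hBCQ,
    kronecker_smul, kronecker_mul_transpose_kronecker, sub_kronecker]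
  abel
end

section
/- Let Q ∈ ℝ^{k×k} be symmetric positive definite, J ∈ ℝ^{k×k} skew-symmetric, R ∈ ℝ^{k×k} symmetric positive semidefinite, B ∈ ℝ^{k×m₀}; set A = (J − R)Q and C = BᵀQ. Let E, F ∈ ℝ^{n×(n−1)}, L_e = EᵀF, G ∈ ℝ^{n×q}, and suppose every complex eigenvalue of 𝒜 := I_{n−1} ⊗ A − L_e ⊗ BC has strictly negative real part. Let P̄_e be the symmetric matrix solving the Lyapunov equation 𝒜 P̄_e + P̄_e 𝒜ᵀ + (EᵀG ⊗ B)(EᵀG ⊗ B)ᵀ = 0 (the edge controllability Gramian). If Π^c ∈ ℝ^{(n−1)×(n−1)} is diagonal positive semidefinite and satisfies L_eΠ^c + Π^c L_eᵀ − EᵀG GᵀE ⪰ 0, then Π^c ⊗ Q^{−1} − P̄_e is positive semidefinite, i.e., P̄_e ⪯ Π^c ⊗ Q^{−1}. -/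
open Matrix Kronecker

/-!
With `X := Π^c ⊗ Q⁻¹ - P̄_e`, the factor `Q⁻¹` cancels the `Q` in `A = (J - R) Q` and in
`B C = B Bᵀ Q`, so that `X` solves the Lyapunov equation
`𝒜 X + X 𝒜ᵀ = -(Π^c ⊗ 2R + (L_e Π^c + Π^c L_eᵀ - Eᵀ G Gᵀ E) ⊗ B Bᵀ)`, whose right-hand side is
negative semidefinite. For a Hurwitz `𝒜` this forces `X ⪰ 0`: along `w t = exp (t 𝒜ᵀ) v` the
quadratic form `w tᵀ X w t` is nonincreasing and tends to `0`. The decay of `exp (t 𝒜ᵀ) v` is read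
off the generalized eigenspace decomposition of `𝒜` over `ℂ`.
-/

open Filter Topology NormedSpace

section Kronecker

variable {α l m n p : Type*}

theorem Matrix.sub_kronecker_s10 [Ring α] (A₁ A₂ : Matrix l m α) (B : Matrix n p α) :
    (A₁ - A₂) ⊗ₖ B = A₁ ⊗ₖ B - A₂ ⊗ₖ B := by
  ext; simp [sub_mul]

theorem Matrix.kronecker_neg [Ring α] (A : Matrix l m α) (B : Matrix n p α) :
    A ⊗ₖ (-B) = -(A ⊗ₖ B) := by
  ext; simp

theorem Matrix.kronecker_mul_kronecker_transpose [CommSemiring α] [Fintype m] [Fintype p]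
    (A : Matrix l m α) (B : Matrix n p α) :
    (A ⊗ₖ B) * (A ⊗ₖ B)ᵀ = (A * Aᵀ) ⊗ₖ (B * Bᵀ) := by
  rw [← kroneckerMap_transpose, ← mul_kronecker_mul]

theorem Matrix.kronecker_inv_lyapunov_of_portHamiltonian [CommRing α]
    [Fintype l] [DecidableEq l] [Fintype n] [DecidableEq n] [Fintype m]
    {Le P : Matrix l l α} {J R Q : Matrix n n α} (B : Matrix n m α) (hQ : IsUnit Q.det)
    (hQt : Qᵀ = Q) (hJ : Jᵀ = -J) (hR : Rᵀ = R) (hP : Pᵀ = P) :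
    (1 ⊗ₖ ((J - R) * Q) - Le ⊗ₖ (B * (Bᵀ * Q))) * (P ⊗ₖ Q⁻¹) +
        (P ⊗ₖ Q⁻¹) * (1 ⊗ₖ ((J - R) * Q) - Le ⊗ₖ (B * (Bᵀ * Q)))ᵀ =
      -(P ⊗ₖ (R + R) + (Le * P + P * Leᵀ) ⊗ₖ (B * Bᵀ)) := by
  have hY : (P ⊗ₖ Q⁻¹)ᵀ = P ⊗ₖ Q⁻¹ := by
    rw [← kroneckerMap_transpose, hP, transpose_nonsing_inv, hQt]
  have h𝒜Y : (1 ⊗ₖ ((J - R) * Q) - Le ⊗ₖ (B * (Bᵀ * Q))) * (P ⊗ₖ Q⁻¹) =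
      P ⊗ₖ (J - R) - (Le * P) ⊗ₖ (B * Bᵀ) := by
    rw [sub_mul, ← mul_kronecker_mul, ← mul_kronecker_mul, Matrix.one_mul, Matrix.mul_assoc,
      Matrix.mul_assoc, Matrix.mul_assoc Bᵀ, mul_nonsing_inv _ hQ, Matrix.mul_one, Matrix.mul_one]
  have hJR : (J - R) + (J - R)ᵀ = -(R + R) := by
    rw [transpose_sub, hJ, hR]; abel
  rw [← hY, ← transpose_mul, hY, h𝒜Y, transpose_sub, ← kroneckerMap_transpose,
    ← kroneckerMap_transpose, transpose_mul, transpose_mul, transpose_transpose, hP,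
    sub_add_sub_comm, ← kronecker_add, hJR, kronecker_neg, ← add_kronecker, neg_add']

end Kronecker

theorem Matrix.dotProduct_transpose_mul_mul_mulVec {ι R : Type*} [Fintype ι] [CommSemiring R]
    (P Y : Matrix ι ι R) (v : ι → R) :
    v ⬝ᵥ (Pᵀ * Y * P) *ᵥ v = (P *ᵥ v) ⬝ᵥ Y *ᵥ (P *ᵥ v) := by
  rw [← mulVec_mulVec, ← mulVec_mulVec, dotProduct_mulVec, vecMul_transpose]

theorem tendsto_ofReal_pow_mul_cexp_atTop {μ : ℂ} (hμ : μ.re < 0) (j : ℕ) :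
    Tendsto (fun t : ℝ => (t : ℂ) ^ j * Complex.exp (t * μ)) atTop (𝓝 0) := by
  rw [tendsto_zero_iff_norm_tendsto_zero]
  refine (tendsto_rpow_mul_exp_neg_mul_atTop_nhds_zero j (-μ.re) (by linarith)).congr' ?_
  filter_upwards [eventually_ge_atTop 0] with t ht
  simp [Complex.norm_exp, abs_of_nonneg ht, mul_comm]

def Matrix.IsHurwitz {ι : Type*} [Fintype ι] [DecidableEq ι] (M : Matrix ι ι ℝ) : Prop :=
  ∀ μ : ℂ, (M.map Complex.ofReal).charpoly.IsRoot μ → μ.re < 0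

theorem Matrix.IsHurwitz.transpose {ι : Type*} [Fintype ι] [DecidableEq ι] {M : Matrix ι ι ℝ}
    (hM : M.IsHurwitz) : Mᵀ.IsHurwitz := by
  intro μ hμ
  rw [transpose_map, charpoly_transpose] at hμ
  exact hM μ hμ

section Exponential

attribute [local instance] Matrix.linftyOpNormedRing Matrix.linftyOpNormedAlgebra

variable {ι : Type*} [Fintype ι] [DecidableEq ι]

theorem Matrix.exp_mulVec_eq_sum_of_pow_mulVec_eq_zero {𝕂 : Type*} [RCLike 𝕂]
    {N : Matrix ι ι 𝕂} {v : ι → 𝕂} {K : ℕ} (hK : N ^ K *ᵥ v = 0) :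
    exp N *ᵥ v = ∑ j ∈ Finset.range K, (j.factorial⁻¹ : 𝕂) • (N ^ j *ᵥ v) := by
  have hsum : HasSum (fun j : ℕ => (j.factorial⁻¹ : 𝕂) • (N ^ j *ᵥ v)) (exp N *ᵥ v) := by
    convert (exp_series_hasSum_exp' (𝕂 := 𝕂) N).map (mulVec.addMonoidHomLeft v)
      (Continuous.matrix_mulVec continuous_id continuous_const) using 1
    · ext j : 1
      simp [mulVec.addMonoidHomLeft, smul_mulVec]
    -- the `l∞` operator norm induces the product topology on matrices definitionally
    · rfl
  refine hsum.unique (hasSum_sum_of_ne_finset_zero fun j hj => ?_)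
  obtain ⟨i, rfl⟩ := Nat.exists_eq_add_of_le' (not_lt.mp (Finset.mem_range.not.mp hj))
  rw [pow_add, ← mulVec_mulVec, hK, mulVec_zero, smul_zero]

theorem Matrix.tendsto_exp_smul_mulVec_of_mem_maxGenEigenspace {M : Matrix ι ι ℂ} {μ : ℂ}
    (hμ : μ.re < 0) {v : ι → ℂ} (hv : v ∈ Module.End.maxGenEigenspace (toLinAlgEquiv' M) μ) :
    Tendsto (fun t : ℝ => exp ((t : ℂ) • M) *ᵥ v) atTop (𝓝 0) := by
  obtain ⟨K, hK⟩ := (Module.End.mem_maxGenEigenspace _ _ _).mp hv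
  set N := M - μ • 1
  have hNK : N ^ K *ᵥ v = 0 := by
    rwa [← map_one toLinAlgEquiv', ← map_smul, ← map_sub, ← map_pow, toLinAlgEquiv'_apply] at hK
  have hexp (t : ℝ) : exp ((t : ℂ) • M) *ᵥ v = ∑ j ∈ Finset.range K,
      ((t : ℂ) ^ j * Complex.exp (t * μ) * (j.factorial⁻¹ : ℂ)) • (N ^ j *ᵥ v) := by
    have hsplit : (t : ℂ) • M = algebraMap ℂ _ ((t : ℂ) * μ) + (t : ℂ) • N := by
      simp [N, smul_sub, mul_smul, Algebra.algebraMap_eq_smul_one]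
    rw [hsplit, Matrix.exp_add_of_commute _ _ (Algebra.commute_algebraMap_left _ _),
      algebraMap_eq_diagonal, exp_diagonal, Pi.exp_def]
    simp only [Pi.algebraMap_apply, Algebra.algebraMap_self, RingHom.id_apply,
      ← Complex.exp_eq_exp_ℂ]
    rw [← smul_one_eq_diagonal, smul_mul, one_mul, smul_mulVec,
      exp_mulVec_eq_sum_of_pow_mulVec_eq_zero (by rw [smul_pow, smul_mulVec, hNK, smul_zero]),
      Finset.smul_sum]
    refine Finset.sum_congr rfl fun j _ => ?_
    rw [smul_pow, smul_mulVec, smul_smul, smul_smul]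
    ring_nf
  simp_rw [hexp]
  simpa using tendsto_finsetSum _ fun j _ =>
    ((tendsto_ofReal_pow_mul_cexp_atTop hμ j).mul_const _).smul_const (N ^ j *ᵥ v)

theorem Matrix.tendsto_exp_smul_mulVec_of_forall_isRoot_charpoly_re_neg {M : Matrix ι ι ℂ}
    (hM : ∀ μ : ℂ, M.charpoly.IsRoot μ → μ.re < 0) (v : ι → ℂ) :
    Tendsto (fun t : ℝ => exp ((t : ℂ) • M) *ᵥ v) atTop (𝓝 0) := by
  have hv : v ∈ ⨆ μ, Module.End.maxGenEigenspace (toLinAlgEquiv' M) μ := by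
    rw [Module.End.iSup_maxGenEigenspace_eq_top]; trivial
  induction hv using Submodule.iSup_induction' with
  | mem μ x hx =>
    rcases eq_or_ne x 0 with rfl | hx0
    · simp
    have hμ : M.charpoly.IsRoot μ := by
      rw [← charpoly_toLin', ← Module.End.hasEigenvalue_iff_isRoot_charpoly]
      exact (Module.End.hasUnifEigenvalue_iff_hasUnifEigenvalue_one (by simp)).mp
        ((Submodule.ne_bot_iff _).mpr ⟨x, hx, hx0⟩)
    exact tendsto_exp_smul_mulVec_of_mem_maxGenEigenspace (hM μ hμ) hx
  | zero => simp
  | add x y _ _ hx hy => simpa [mulVec_add] using hx.add hy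

theorem Matrix.map_ofReal_exp (M : Matrix ι ι ℝ) :
    (exp M).map Complex.ofReal = exp (M.map Complex.ofReal) :=
  map_exp (RingHom.mapMatrix Complex.ofRealHom)
    (continuous_id.matrix_map Complex.continuous_ofReal) M

theorem Matrix.IsHurwitz.tendsto_exp_smul_mulVec {M : Matrix ι ι ℝ} (hM : M.IsHurwitz)
    (v : ι → ℝ) : Tendsto (fun t : ℝ => exp (t • M) *ᵥ v) atTop (𝓝 0) := by
  have hre : Continuous fun w : ι → ℂ => fun i => (w i).re :=
    continuous_pi fun i => Complex.continuous_re.comp (continuous_apply i)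
  have hexp (t : ℝ) : exp (t • M) *ᵥ v =
      fun i => ((exp ((t : ℂ) • M.map Complex.ofReal) *ᵥ (Complex.ofReal ∘ v)) i).re := by
    ext i
    have hsmul : (t • M).map Complex.ofReal = (t : ℂ) • M.map Complex.ofReal := by ext; simp
    rw [← hsmul, ← map_ofReal_exp, ← Complex.ofReal_re ((exp (t • M) *ᵥ v) i)]
    exact congrArg Complex.re (RingHom.map_mulVec Complex.ofRealHom _ _ i)
  simp_rw [hexp]
  exact (hre.tendsto' 0 0 (by ext; simp)).comp
    (tendsto_exp_smul_mulVec_of_forall_isRoot_charpoly_re_neg hM (Complex.ofReal ∘ v))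

theorem Matrix.IsHurwitz.posSemidef_of_lyapunov {M X S : Matrix ι ι ℝ} (hM : M.IsHurwitz)
    (hX : Xᵀ = X) (hS : S.PosSemidef) (hMX : M * X + X * Mᵀ = -S) : X.PosSemidef := by
  refine .of_dotProduct_mulVec_nonneg (isHermitian_iff_isSymm.mpr hX) fun v => ?_
  rw [star_trivial]
  let q : Matrix ι ι ℝ →L[ℝ] ℝ := LinearMap.toContinuousLinearMap
    { toFun Y := v ⬝ᵥ Y *ᵥ v
      map_add' Y Z := by simp [add_mulVec, dotProduct_add]
      map_smul' c Y := by simp [smul_mulVec, dotProduct_smul] }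
  have hq (Y : Matrix ι ι ℝ) (t : ℝ) : q (exp (t • M) * Y * exp (t • Mᵀ)) =
      (exp (t • Mᵀ) *ᵥ v) ⬝ᵥ Y *ᵥ (exp (t • Mᵀ) *ᵥ v) := by
    rw [← dotProduct_transpose_mul_mul_mulVec, ← exp_transpose, transpose_smul,
      transpose_transpose]
    rfl
  let g (t : ℝ) : ℝ := q (exp (t • M) * X * exp (t • Mᵀ))
  have hg (t : ℝ) : HasDerivAt g (q (exp (t • M) * (-S) * exp (t • Mᵀ))) t := by
    rw [← hMX]
    have hW := ((hasDerivAt_exp_smul_const (𝕂 := ℝ) M t).mul_const X).mul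
      (hasDerivAt_exp_smul_const' (𝕂 := ℝ) Mᵀ t)
    refine (q.hasFDerivAt.comp_hasDerivAt t hW).congr_deriv ?_
    congr 1
    noncomm_ring
  have hanti : Antitone g := antitone_of_hasDerivAt_nonpos hg fun t => by
    rw [Pi.zero_apply, hq, neg_mulVec, dotProduct_neg, neg_nonpos]
    simpa using hS.dotProduct_mulVec_nonneg (exp (t • Mᵀ) *ᵥ v)
  have hlim : Tendsto g atTop (𝓝 0) := by
    have hquad : Continuous fun w : ι → ℝ => w ⬝ᵥ X *ᵥ w :=
      continuous_id.dotProduct (continuous_const.matrix_mulVec continuous_id)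
    simpa only [g, hq, Function.comp_def] using (hquad.tendsto' 0 0 (by simp)).comp
      (hM.transpose.tendsto_exp_smul_mulVec v)
  simpa [g, hq] using le_of_tendsto hlim (eventually_atTop.2 ⟨0, fun t ht => hanti ht⟩)

end Exponential

theorem generalized_edge_controllability_gramian_bound_general
    (n k m₀ q : ℕ)
    (Q J R : Matrix (Fin k) (Fin k) ℝ) (B : Matrix (Fin k) (Fin m₀) ℝ)
    (hQ : Q.PosDef) (hJ : Jᵀ = -J) (hR : R.PosSemidef)
    (A : Matrix (Fin k) (Fin k) ℝ) (hA : A = (J - R) * Q)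
    (C : Matrix (Fin m₀) (Fin k) ℝ) (hC : C = Bᵀ * Q)
    (E : Matrix (Fin n) (Fin (n-1)) ℝ)
    (Le : Matrix (Fin (n-1)) (Fin (n-1)) ℝ)
    (G : Matrix (Fin n) (Fin q) ℝ)
    (𝒜 : Matrix (Fin (n-1) × Fin k) (Fin (n-1) × Fin k) ℝ)
    (h𝒜 : 𝒜 = (1 : Matrix (Fin (n-1)) (Fin (n-1)) ℝ) ⊗ₖ A - Le ⊗ₖ (B * C))
    -- 𝒜 is Hurwitz
    (hHurwitz : ∀ μ : ℂ, ((𝒜.map (Complex.ofReal)).charpoly).IsRoot μ → μ.re < 0)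
    -- the edge controllability Gramian
    (Pe : Matrix (Fin (n-1) × Fin k) (Fin (n-1) × Fin k) ℝ)
    (hPesymm : Peᵀ = Pe)
    (hPe : 𝒜 * Pe + Pe * 𝒜ᵀ + ((Eᵀ * G) ⊗ₖ B) * ((Eᵀ * G) ⊗ₖ B)ᵀ = 0)
    -- the generalized edge controllability Gramian certificate
    (Pc : Matrix (Fin (n-1)) (Fin (n-1)) ℝ)
    (hPcpsd : Pc.PosSemidef)
    (hPcineq : (Le * Pc + Pc * Leᵀ - Eᵀ * G * Gᵀ * E).PosSemidef) :
    (Pc ⊗ₖ Q⁻¹ - Pe).PosSemidef := by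
  subst hA hC
  have hsymm {ι : Type} [Fintype ι] {X : Matrix ι ι ℝ} (hX : X.PosSemidef) : Xᵀ = X :=
    (isHermitian_iff_isSymm.mp hX.isHermitian).eq
  have hBBt : (B * Bᵀ).PosSemidef := by
    simpa [conjTranspose_eq_transpose_of_trivial] using posSemidef_self_mul_conjTranspose B
  have hgramian := eq_neg_of_add_eq_zero_left hPe
  rw [kronecker_mul_kronecker_transpose, transpose_mul, transpose_transpose,
    ← Matrix.mul_assoc (Eᵀ * G)] at hgramian
  have hPcQ := kronecker_inv_lyapunov_of_portHamiltonian (Le := Le) B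
    ((isUnit_iff_isUnit_det Q).mp hQ.isUnit) (hsymm hQ.posSemidef) hJ (hsymm hR) (hsymm hPcpsd)
  rw [← h𝒜] at hPcQ
  refine IsHurwitz.posSemidef_of_lyapunov hHurwitz
    (S := Pc ⊗ₖ (R + R) + (Le * Pc + Pc * Leᵀ - Eᵀ * G * Gᵀ * E) ⊗ₖ (B * Bᵀ)) ?_ ?_ ?_
  · rw [transpose_sub, ← kroneckerMap_transpose, hsymm hPcpsd, transpose_nonsing_inv,
      hsymm hQ.posSemidef, hPesymm]
  · exact (hPcpsd.kronecker (hR.add hR)).add (hPcineq.kronecker hBBt)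
  · rw [mul_sub, sub_mul, sub_add_sub_comm, hPcQ, hgramian, sub_kronecker_s10]
    abel

/-- the generalized edge controllability Gramian `Π^c ⊗ Q⁻¹` bounds the
edge controllability Gramian `P̄_e` from above: `P̄_e ⪯ Π^c ⊗ Q⁻¹`. -/
theorem generalized_edge_controllability_gramian_bound
    (n k m₀ q : ℕ) (hn : 2 ≤ n)
    (Q J R : Matrix (Fin k) (Fin k) ℝ) (B : Matrix (Fin k) (Fin m₀) ℝ)
    (hQ : Q.PosDef) (hJ : Jᵀ = -J) (hR : R.PosSemidef)
    (A : Matrix (Fin k) (Fin k) ℝ) (hA : A = (J - R) * Q)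
    (C : Matrix (Fin m₀) (Fin k) ℝ) (hC : C = Bᵀ * Q)
    (E F : Matrix (Fin n) (Fin (n-1)) ℝ)
    (Le : Matrix (Fin (n-1)) (Fin (n-1)) ℝ) (hLe : Le = Eᵀ * F)
    (G : Matrix (Fin n) (Fin q) ℝ)
    (𝒜 : Matrix (Fin (n-1) × Fin k) (Fin (n-1) × Fin k) ℝ)
    (h𝒜 : 𝒜 = (1 : Matrix (Fin (n-1)) (Fin (n-1)) ℝ) ⊗ₖ A - Le ⊗ₖ (B * C))
    -- 𝒜 is Hurwitz
    (hHurwitz : ∀ μ : ℂ, ((𝒜.map (Complex.ofReal)).charpoly).IsRoot μ → μ.re < 0)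
    -- the edge controllability Gramian
    (Pe : Matrix (Fin (n-1) × Fin k) (Fin (n-1) × Fin k) ℝ)
    (hPesymm : Peᵀ = Pe)
    (hPe : 𝒜 * Pe + Pe * 𝒜ᵀ + ((Eᵀ * G) ⊗ₖ B) * ((Eᵀ * G) ⊗ₖ B)ᵀ = 0)
    -- the generalized edge controllability Gramian certificate
    (Pc : Matrix (Fin (n-1)) (Fin (n-1)) ℝ)
    (hPcdiag : Pc.IsDiag) (hPcpsd : Pc.PosSemidef)
    (hPcineq : (Le * Pc + Pc * Leᵀ - Eᵀ * G * Gᵀ * E).PosSemidef) :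
    (Pc ⊗ₖ Q⁻¹ - Pe).PosSemidef :=
  generalized_edge_controllability_gramian_bound_general n k m₀ q Q J R B hQ hJ hR A hA C hC E Le G
    𝒜 h𝒜 hHurwitz Pe hPesymm hPe Pc hPcpsd hPcineq
end

section
/- Let n ≥ 3 and let w_{ij} be nonnegative weights with w_{ii} = 0 whose underlying undirected graph is a spanning tree with incidence matrix E ∈ ℝ^{n×(n−1)} and weighted incidence matrix F, ordered so that the last edge connects vertices i = n−1 and j = n with w_{ij} + w_{ji} > 0. Let L be the weighted Laplacian and let V, W ∈ ℝ^{n×(n−1)} be the clustering projection matrices. Then WᵀLV = F̂ Êᵀ, where Ê ∈ ℝ^{(n−1)×(n−2)} is obtained from E by deleting the last column and replacing the last two rows by their sum, and F̂ ∈ ℝ^{(n−1)×(n−2)} is obtained from F by deleting the last column and replacing its last two rows F_{i0}, F_{j0} by (w_{ji}F_{i0} + w_{ij}F_{j0})/(w_{ij} + w_{ji}). -/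
/-!
Contracting the last edge: `Wᵀ F` merges the last two rows of `F` with the weights `w_ji`, `w_ij`
and `Vᵀ E` sums the last two rows of `E`. In both products the entry of the last column vanishes
(`w_ji · w_ij ε - w_ij · w_ji ε = 0` and `ε - ε = 0`), so `Wᵀ L V = (Wᵀ F) (Vᵀ E)ᵀ` reduces to
`F̂ Êᵀ`.
-/

namespace Matrix

variable {R m k l o r₁ r₂ : Type*} [Semiring R]

theorem fromBlocks_one_fromRows_transpose_mul [Fintype m] [Fintype r₁] [Fintype r₂]
    [DecidableEq m] (p : Matrix r₁ o R) (q : Matrix r₂ o R) (A : Matrix m k R)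
    (B : Matrix r₁ k R) (C : Matrix r₂ k R) (P : Matrix r₁ l R) (Q : Matrix r₂ l R) :
    (fromBlocks (1 : Matrix m m R) 0 0 (fromRows p q))ᵀ *
        fromBlocks A 0 (fromRows B C) (fromRows P Q)
      = fromBlocks A 0 (pᵀ * B + qᵀ * C) (pᵀ * P + qᵀ * Q) := by
  simp [fromBlocks_transpose, transpose_fromRows, fromBlocks_multiply, fromCols_mul_fromRows]

theorem fromBlocks_zero_mul_fromBlocks_zero_transpose [Fintype k] [Fintype l]
    (A : Matrix m k R) (C : Matrix r₁ k R) (A' : Matrix o k R) (C' : Matrix r₂ k R) :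
    fromBlocks A (0 : Matrix m l R) C 0 * (fromBlocks A' (0 : Matrix o l R) C' 0)ᵀ
      = fromRows A C * (fromRows A' C')ᵀ := by
  simp only [← fromCols_fromRows_eq_fromBlocks, fromRows_zero, transpose_fromCols,
    fromCols_mul_fromRows, Matrix.zero_mul, add_zero]

end Matrix

open Matrix

theorem clustered_laplacian_factorization_general
    (n : ℕ)
    -- weights of the last edge, connecting vertices n-1 and n: a = w_ij, b = w_ji
    (a b : ℝ)
    (ε : ℝ)
    -- block structure of the incidence and weighted incidence matrices
    (E00 F00 : Matrix (Fin (n-2)) (Fin (n-2)) ℝ)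
    (Ei0 Ej0 Fi0 Fj0 : Matrix (Fin 1) (Fin (n-2)) ℝ)
    (E F : Matrix (Fin (n-2) ⊕ (Fin 1 ⊕ Fin 1)) (Fin (n-2) ⊕ Fin 1) ℝ)
    (hE : E = Matrix.fromBlocks E00 0 (Matrix.fromRows Ei0 Ej0)
      (Matrix.fromRows (ε • (1 : Matrix (Fin 1) (Fin 1) ℝ))
        ((-ε) • (1 : Matrix (Fin 1) (Fin 1) ℝ))))
    (hF : F = Matrix.fromBlocks F00 0 (Matrix.fromRows Fi0 Fj0)
      (Matrix.fromRows ((a * ε) • (1 : Matrix (Fin 1) (Fin 1) ℝ))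
        ((-(b * ε)) • (1 : Matrix (Fin 1) (Fin 1) ℝ))))
    -- the weighted Laplacian and its factorization
    (L : Matrix (Fin (n-2) ⊕ (Fin 1 ⊕ Fin 1)) (Fin (n-2) ⊕ (Fin 1 ⊕ Fin 1)) ℝ)
    (hL : L = F * Eᵀ)
    -- the clustering projection matrices
    (V W : Matrix (Fin (n-2) ⊕ (Fin 1 ⊕ Fin 1)) (Fin (n-2) ⊕ Fin 1) ℝ)
    (hV : V = Matrix.fromBlocks 1 0 0
      (Matrix.fromRows (1 : Matrix (Fin 1) (Fin 1) ℝ) (1 : Matrix (Fin 1) (Fin 1) ℝ)))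
    (hW : W = Matrix.fromBlocks 1 0 0
      (Matrix.fromRows ((b / (a + b)) • (1 : Matrix (Fin 1) (Fin 1) ℝ))
        ((a / (a + b)) • (1 : Matrix (Fin 1) (Fin 1) ℝ))))
    -- the clustered incidence-type matrices
    (Ehat Fhat : Matrix (Fin (n-2) ⊕ Fin 1) (Fin (n-2)) ℝ)
    (hEhat : Ehat = Matrix.fromRows E00 (Ei0 + Ej0))
    (hFhat : Fhat = Matrix.fromRows F00
      ((b / (a + b)) • Fi0 + (a / (a + b)) • Fj0)) :
    Wᵀ * L * V = Fhat * Ehatᵀ := by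
  have hWF : Wᵀ * F = fromBlocks F00 0 ((b / (a + b)) • Fi0 + (a / (a + b)) • Fj0) 0 := by
    rw [hW, hF, fromBlocks_one_fromRows_transpose_mul]
    simp only [transpose_smul, transpose_one, smul_mul, Matrix.one_mul, smul_smul, ← add_smul]
    rw [show b / (a + b) * (a * ε) + a / (a + b) * -(b * ε) = 0 by ring, zero_smul]
  have hVE : Vᵀ * E = fromBlocks E00 0 (Ei0 + Ej0) 0 := by
    rw [hV, hE, fromBlocks_one_fromRows_transpose_mul]
    simp only [transpose_one, Matrix.one_mul, ← add_smul, add_neg_cancel, zero_smul]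
  calc Wᵀ * L * V = Wᵀ * F * (Vᵀ * E)ᵀ := by
        rw [hL, transpose_mul, transpose_transpose, Matrix.mul_assoc, Matrix.mul_assoc,
          Matrix.mul_assoc]
    _ = Fhat * Ehatᵀ := by
        rw [hWF, hVE, fromBlocks_zero_mul_fromBlocks_zero_transpose, hFhat, hEhat]

/-- one-step clustering of the two vertices joined by the last edge:
`Wᵀ L V = F̂ Êᵀ`, where `Ê` is obtained from `E` by deleting the last column and summing
the last two rows, and `F̂` from `F` by deleting the last column and replacing the last
two rows by their convex combination with weights `w_ji/(w_ij+w_ji)`, `w_ij/(w_ij+w_ji)`. -/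
theorem clustered_laplacian_factorization
    (n : ℕ) (hn : 3 ≤ n)
    -- weights of the last edge, connecting vertices n-1 and n: a = w_ij, b = w_ji
    (a b : ℝ) (ha : 0 ≤ a) (hb : 0 ≤ b) (hab : 0 < a + b)
    (ε : ℝ) (hε : ε = 1 ∨ ε = -1)
    -- block structure of the incidence and weighted incidence matrices
    (E00 F00 : Matrix (Fin (n-2)) (Fin (n-2)) ℝ)
    (Ei0 Ej0 Fi0 Fj0 : Matrix (Fin 1) (Fin (n-2)) ℝ)
    (E F : Matrix (Fin (n-2) ⊕ (Fin 1 ⊕ Fin 1)) (Fin (n-2) ⊕ Fin 1) ℝ)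
    (hE : E = Matrix.fromBlocks E00 0 (Matrix.fromRows Ei0 Ej0)
      (Matrix.fromRows (ε • (1 : Matrix (Fin 1) (Fin 1) ℝ))
        ((-ε) • (1 : Matrix (Fin 1) (Fin 1) ℝ))))
    (hF : F = Matrix.fromBlocks F00 0 (Matrix.fromRows Fi0 Fj0)
      (Matrix.fromRows ((a * ε) • (1 : Matrix (Fin 1) (Fin 1) ℝ))
        ((-(b * ε)) • (1 : Matrix (Fin 1) (Fin 1) ℝ))))
    -- the underlying undirected graph is a spanning tree
    (hrankE : E.rank = n - 1)
    -- the weighted Laplacian and its factorization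
    (L : Matrix (Fin (n-2) ⊕ (Fin 1 ⊕ Fin 1)) (Fin (n-2) ⊕ (Fin 1 ⊕ Fin 1)) ℝ)
    (hL : L = F * Eᵀ)
    -- the clustering projection matrices
    (V W : Matrix (Fin (n-2) ⊕ (Fin 1 ⊕ Fin 1)) (Fin (n-2) ⊕ Fin 1) ℝ)
    (hV : V = Matrix.fromBlocks 1 0 0
      (Matrix.fromRows (1 : Matrix (Fin 1) (Fin 1) ℝ) (1 : Matrix (Fin 1) (Fin 1) ℝ)))
    (hW : W = Matrix.fromBlocks 1 0 0
      (Matrix.fromRows ((b / (a + b)) • (1 : Matrix (Fin 1) (Fin 1) ℝ))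
        ((a / (a + b)) • (1 : Matrix (Fin 1) (Fin 1) ℝ))))
    -- the clustered incidence-type matrices
    (Ehat Fhat : Matrix (Fin (n-2) ⊕ Fin 1) (Fin (n-2)) ℝ)
    (hEhat : Ehat = Matrix.fromRows E00 (Ei0 + Ej0))
    (hFhat : Fhat = Matrix.fromRows F00
      ((b / (a + b)) • Fi0 + (a / (a + b)) • Fj0)) :
    Wᵀ * L * V = Fhat * Ehatᵀ :=
  clustered_laplacian_factorization_general n a b ε E00 F00 Ei0 Ej0 Fi0 Fj0 E F hE hF L hL V W hV hW
    Ehat Fhat hEhat hFhat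
end

section
/- In the one-step clustering setup on a spanning tree (n ≥ 3 vertices, weights w_{ij} ≥ 0, last edge connecting vertices n−1 and n with w_{ij} + w_{ji} > 0), assume additionally rank F = n − 1. Then the reduced incidence-type matrices satisfy rank Ê = n − 2 and rank F̂ = n − 2; consequently the reduced Laplacian L̂ = WᵀLV = F̂Êᵀ has rank n − 2, each column of Ê has exactly two nonzero entries, equal to 1 and −1, and thus the reduced network again has a spanning tree as underlying undirected graph and satisfies the directed-rooted-spanning-tree rank condition. -/
/-!
`Wᵀ V = Vᵀ W = 1`, so `Vᵀ` and `Wᵀ` have full row rank `n - 1`. Their products with `E` and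
`F` are `[Ê 0]` and `[F̂ 0]`: the last column cancels because it lies in the kernel of `Vᵀ`
(resp. `Wᵀ`). Sylvester's rank inequality `rank P + rank A ≤ rank (P A) + n` then forces
`rank Ê, rank F̂ ≥ (n - 1) + (n - 1) - n`, and, applied once more,
`rank (F̂ Êᵀ) = rank Êᵀ` since `F̂` has full column rank. Each row of `V` is a standard
basis vector, so `Vᵀ` sends the column `e_i - e_j` of `E` to `e_{i'} - e_{j'}`, which is nonzero
because the columns of `Ê` are independent.
-/

open Matrix Module

namespace Matrix

variable {l m n k ι K : Type*}

theorem rank_add_rank_le_rank_mul_add_card [Field K] [Fintype m] [Fintype n]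
    (A : Matrix l m K) (B : Matrix m n K) :
    A.rank + B.rank ≤ (A * B).rank + Fintype.card m := by
  set f := A.mulVecLin
  set S := LinearMap.range B.mulVecLin
  have hAB : (A * B).rank = finrank K (S.map f) := by
    rw [rank, mulVecLin_mul, LinearMap.range_comp]
  have hker : finrank K (LinearMap.ker (f.domRestrict S)) ≤ finrank K (LinearMap.ker f) := by
    rw [LinearMap.ker_domRestrict, ← Submodule.finrank_map_subtype_eq]
    exact Submodule.finrank_mono (Submodule.map_comap_le _ _)
  have hS := LinearMap.finrank_range_add_finrank_ker (f.domRestrict S)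
  have hA := LinearMap.finrank_range_add_finrank_ker f
  rw [LinearMap.range_domRestrict] at hS
  rw [Module.finrank_fintype_fun_eq_card] at hA
  change finrank K (LinearMap.range f) + finrank K S ≤ _
  omega

theorem rank_eq_card_height_of_mul_eq_one [CommRing K] [StrongRankCondition K] [Fintype m]
    [Fintype n] [DecidableEq m] {P : Matrix m n K} {Q : Matrix n m K} (h : P * Q = 1) :
    P.rank = Fintype.card m :=
  le_antisymm P.rank_le_card_height (by simpa [h, rank_one] using rank_mul_le_left P Q)

theorem rank_fromCols_zero_le [CommRing K] [StrongRankCondition K] [Fintype k] [Fintype ι]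
    [DecidableEq k] (A : Matrix m k K) : (fromCols A (0 : Matrix m ι K)).rank ≤ A.rank := by
  have : fromCols A (0 : Matrix m ι K) = A * fromCols (1 : Matrix k k K) 0 := by
    rw [mul_fromCols, Matrix.mul_one, Matrix.mul_zero]
  exact this ▸ rank_mul_le_left _ _

theorem rank_eq_card_width_of_mul_eq_fromCols_zero [Field K] [Fintype m] [Fintype n]
    [Fintype k] [Fintype ι] [DecidableEq m] [DecidableEq k] {P : Matrix m n K} {Q : Matrix n m K}
    (hPQ : P * Q = 1) {A : Matrix n (k ⊕ ι) K} {B : Matrix m k K} (hPA : P * A = fromCols B 0)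
    (hA : A.rank = Fintype.card (k ⊕ ι))
    (hcard : Fintype.card n = Fintype.card m + Fintype.card ι) :
    B.rank = Fintype.card k := by
  have h := rank_add_rank_le_rank_mul_add_card P A
  rw [rank_eq_card_height_of_mul_eq_one hPQ, hPA, hA, hcard, Fintype.card_sum] at h
  have := rank_fromCols_zero_le (ι := ι) B
  have := B.rank_le_card_width
  omega

theorem rank_mul_eq_right_of_rank_eq_card_width [Field K] [Fintype m] [Fintype n]
    {A : Matrix l m K} (hA : A.rank = Fintype.card m) (B : Matrix m n K) :
    (A * B).rank = B.rank := by
  have := rank_add_rank_le_rank_mul_add_card A B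
  have := rank_mul_le_right A B
  omega

theorem linearIndependent_col_of_rank_eq [Field K] [Fintype n] {A : Matrix m n K}
    (h : A.rank = Fintype.card n) : LinearIndependent K A.col := by
  rw [linearIndependent_iff_card_eq_finrank_span, ← h, rank_eq_finrank_span_cols, Set.finrank]

/-- `mergeMatrix 1 1` is the paper's `V` and `mergeMatrix (w_ji / (w_ij + w_ji))
(w_ij / (w_ij + w_ji))` its `W`; both merge the two vertices indexed by `ι ⊕ ι` into one. -/
def mergeMatrix [Semiring K] [DecidableEq m] [DecidableEq ι] (p q : K) :
    Matrix (m ⊕ (ι ⊕ ι)) (m ⊕ ι) K :=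
  fromBlocks 1 0 0 (fromRows (p • 1) (q • 1))

theorem mergeMatrix_transpose_mul [CommRing K] [Fintype m] [Fintype ι] [DecidableEq m]
    [DecidableEq ι] (p q α β : K) (X : Matrix m k K) (Xi Xj : Matrix ι k K) :
    (mergeMatrix p q : Matrix (m ⊕ (ι ⊕ ι)) (m ⊕ ι) K)ᵀ *
        fromBlocks X 0 (fromRows Xi Xj) (fromRows (α • (1 : Matrix ι ι K)) (β • 1)) =
      fromBlocks X 0 (p • Xi + q • Xj) ((p * α + q * β) • 1) := by
  rw [mergeMatrix, fromBlocks_transpose, transpose_fromRows, fromBlocks_multiply,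
    fromCols_mul_fromRows, fromCols_mul_fromRows]
  simp [smul_smul, add_smul, mul_comm]

theorem row_mergeMatrix_one_one [Semiring K] [DecidableEq m] [DecidableEq ι]
    (x : m ⊕ (ι ⊕ ι)) :
    (mergeMatrix (1 : K) 1 : Matrix _ (m ⊕ ι) K).row x =
      Pi.single (Sum.map id (Sum.elim id id) x) 1 := by
  rcases x with r | i | i <;> ext (c | c) <;>
    simp [mergeMatrix, one_apply, Pi.single_apply, eq_comm]

theorem mergeMatrix_transpose_mul_mergeMatrix [CommRing K] [Fintype m] [Fintype ι]
    [DecidableEq m] [DecidableEq ι] {p q p' q' : K} (h : p * p' + q * q' = 1) :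
    (mergeMatrix p q : Matrix (m ⊕ (ι ⊕ ι)) (m ⊕ ι) K)ᵀ *
      (mergeMatrix p' q' : Matrix (m ⊕ (ι ⊕ ι)) (m ⊕ ι) K) = 1 := by
  have hW : (mergeMatrix p' q' : Matrix (m ⊕ (ι ⊕ ι)) (m ⊕ ι) K) =
      fromBlocks 1 0 (fromRows 0 0) (fromRows (p' • (1 : Matrix ι ι K)) (q' • 1)) := by
    rw [fromRows_zero, mergeMatrix]
  rw [hW, mergeMatrix_transpose_mul, h]
  simp [fromBlocks_one]

end Matrix

def IsIncidenceVector {ι R : Type*} [Ring R] (c : ι → R) : Prop :=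
  ∃ i j, i ≠ j ∧ c i = 1 ∧ c j = -1 ∧ ∀ k, k ≠ i → k ≠ j → c k = 0

theorem isIncidenceVector_iff {ι R : Type*} [Ring R] [DecidableEq ι] {c : ι → R} :
    IsIncidenceVector c ↔ ∃ i j, i ≠ j ∧ c = Pi.single i 1 - Pi.single j 1 := by
  constructor
  · rintro ⟨i, j, hij, hi, hj, h0⟩
    refine ⟨i, j, hij, funext fun k => ?_⟩
    by_cases hki : k = i
    · subst hki; simp [hi, hij]
    by_cases hkj : k = j
    · subst hkj; simp [hj, hki]
    · simp [h0 k hki hkj, hki, hkj]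
  · rintro ⟨i, j, hij, rfl⟩
    refine ⟨i, j, hij, by simp [hij], by simp [hij.symm], fun k hki hkj => by simp [hki, hkj]⟩

theorem IsIncidenceVector.transpose_mulVec {m n R : Type*} [Ring R] [Fintype m] [DecidableEq m]
    [DecidableEq n] {P : Matrix m n R} (hP : ∀ x, ∃ y, P.row x = Pi.single y 1) {c : m → R}
    (hc : IsIncidenceVector c) (h0 : Pᵀ *ᵥ c ≠ 0) : IsIncidenceVector (Pᵀ *ᵥ c) := by
  obtain ⟨i, j, -, rfl⟩ := isIncidenceVector_iff.mp hc
  obtain ⟨y, hy⟩ := hP i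
  obtain ⟨y', hy'⟩ := hP j
  rw [mulVec_sub, mulVec_single_one, mulVec_single_one, col_transpose, hy, hy'] at h0 ⊢
  exact isIncidenceVector_iff.mpr ⟨y, y', fun h => h0 (by rw [h, sub_self]), rfl⟩

theorem IsIncidenceVector.col_of_transpose_mul_eq_fromCols {m n k ι R : Type*} [Ring R]
    [Fintype m] [DecidableEq m] [DecidableEq n] {V : Matrix m n R}
    (hV : ∀ x, ∃ y, V.row x = Pi.single y 1) {A : Matrix m (k ⊕ ι) R} {B : Matrix n k R}
    (hVA : Vᵀ * A = fromCols B 0) (hA : ∀ j, IsIncidenceVector (A.col j))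
    (hB : ∀ l, B.col l ≠ 0) (l : k) : IsIncidenceVector (B.col l) := by
  have hcol : B.col l = Vᵀ *ᵥ A.col (Sum.inl l) := by
    ext i
    rw [col_apply, ← fromCols_apply_inl B 0, ← hVA]
    rfl
  have hne := hB l
  rw [hcol] at hne ⊢
  exact (hA _).transpose_mulVec hV hne

theorem clustered_network_spanning_tree_general
    (n : ℕ) (hn : 3 ≤ n)
    (a b : ℝ) (hab : 0 < a + b)
    (ε : ℝ)
    (E00 F00 : Matrix (Fin (n-2)) (Fin (n-2)) ℝ)
    (Ei0 Ej0 Fi0 Fj0 : Matrix (Fin 1) (Fin (n-2)) ℝ)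
    (E F : Matrix (Fin (n-2) ⊕ (Fin 1 ⊕ Fin 1)) (Fin (n-2) ⊕ Fin 1) ℝ)
    (hE : E = Matrix.fromBlocks E00 0 (Matrix.fromRows Ei0 Ej0)
      (Matrix.fromRows (ε • (1 : Matrix (Fin 1) (Fin 1) ℝ))
        ((-ε) • (1 : Matrix (Fin 1) (Fin 1) ℝ))))
    (hF : F = Matrix.fromBlocks F00 0 (Matrix.fromRows Fi0 Fj0)
      (Matrix.fromRows ((a * ε) • (1 : Matrix (Fin 1) (Fin 1) ℝ))
        ((-(b * ε)) • (1 : Matrix (Fin 1) (Fin 1) ℝ))))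
    -- E is an incidence matrix: each column has exactly two nonzero entries, 1 and -1
    (hEcols : ∀ l, ∃ i j, i ≠ j ∧ E i l = 1 ∧ E j l = -1 ∧
      ∀ i', i' ≠ i → i' ≠ j → E i' l = 0)
    -- spanning tree and directed-rooted-spanning-tree conditions
    (hrankE : E.rank = n - 1)
    (hrankF : F.rank = n - 1)
    (L : Matrix (Fin (n-2) ⊕ (Fin 1 ⊕ Fin 1)) (Fin (n-2) ⊕ (Fin 1 ⊕ Fin 1)) ℝ)
    (hL : L = F * Eᵀ)
    (V W : Matrix (Fin (n-2) ⊕ (Fin 1 ⊕ Fin 1)) (Fin (n-2) ⊕ Fin 1) ℝ)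
    (hV : V = Matrix.fromBlocks 1 0 0
      (Matrix.fromRows (1 : Matrix (Fin 1) (Fin 1) ℝ) (1 : Matrix (Fin 1) (Fin 1) ℝ)))
    (hW : W = Matrix.fromBlocks 1 0 0
      (Matrix.fromRows ((b / (a + b)) • (1 : Matrix (Fin 1) (Fin 1) ℝ))
        ((a / (a + b)) • (1 : Matrix (Fin 1) (Fin 1) ℝ))))
    (Ehat Fhat : Matrix (Fin (n-2) ⊕ Fin 1) (Fin (n-2)) ℝ)
    (hEhat : Ehat = Matrix.fromRows E00 (Ei0 + Ej0))
    (hFhat : Fhat = Matrix.fromRows F00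
      ((b / (a + b)) • Fi0 + (a / (a + b)) • Fj0))
    (Lhat : Matrix (Fin (n-2) ⊕ Fin 1) (Fin (n-2) ⊕ Fin 1) ℝ)
    (hLhat : Lhat = Wᵀ * L * V) :
    Ehat.rank = n - 2 ∧ Fhat.rank = n - 2 ∧
    Lhat = Fhat * Ehatᵀ ∧ Lhat.rank = n - 2 ∧
    ∀ l, ∃ i j, i ≠ j ∧ Ehat i l = 1 ∧ Ehat j l = -1 ∧
      ∀ i', i' ≠ i → i' ≠ j → Ehat i' l = 0 := by
  have hV : V = mergeMatrix 1 1 := by simp [hV, mergeMatrix]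
  have hW : W = mergeMatrix (b / (a + b)) (a / (a + b)) := hW
  have hweights : b / (a + b) + a / (a + b) = 1 := by
    rw [← add_div, add_comm, div_self hab.ne']
  have hVW : Vᵀ * W = 1 := by
    rw [hV, hW]; exact mergeMatrix_transpose_mul_mergeMatrix (by simpa using hweights)
  have hWV : Wᵀ * V = 1 := by
    rw [hV, hW]; exact mergeMatrix_transpose_mul_mergeMatrix (by simpa using hweights)
  have hVE : Vᵀ * E = fromCols Ehat 0 := by
    rw [hV, hE, mergeMatrix_transpose_mul, hEhat, ← fromRows_zero,
      fromCols_fromRows_eq_fromBlocks]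
    simp
  have hWF : Wᵀ * F = fromCols Fhat 0 := by
    have hcancel : b / (a + b) * (a * ε) + a / (a + b) * -(b * ε) = 0 := by ring
    rw [hW, hF, mergeMatrix_transpose_mul, hcancel, zero_smul, hFhat, ← fromRows_zero,
      fromCols_fromRows_eq_fromBlocks]
  have hcard : Fintype.card (Fin (n - 2) ⊕ (Fin 1 ⊕ Fin 1)) =
      Fintype.card (Fin (n - 2) ⊕ Fin 1) + Fintype.card (Fin 1) := by simp
  have hEhat_rank : Ehat.rank = n - 2 := by
    simpa using rank_eq_card_width_of_mul_eq_fromCols_zero hVW hVE (by simp; omega) hcard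
  have hFhat_rank : Fhat.rank = n - 2 := by
    simpa using rank_eq_card_width_of_mul_eq_fromCols_zero hWV hWF (by simp; omega) hcard
  have hLhat_eq : Lhat = Fhat * Ehatᵀ :=
    calc Lhat = (Wᵀ * F) * (Vᵀ * E)ᵀ := by
          simp only [hLhat, hL, transpose_mul, transpose_transpose, Matrix.mul_assoc]
      _ = Fhat * Ehatᵀ := by simp [hWF, hVE, transpose_fromCols, fromCols_mul_fromRows]
  refine ⟨hEhat_rank, hFhat_rank, hLhat_eq, ?_,
    IsIncidenceVector.col_of_transpose_mul_eq_fromCols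
      (fun x => ⟨_, hV ▸ row_mergeMatrix_one_one x⟩) hVE hEcols ?_⟩
  · rw [hLhat_eq, rank_mul_eq_right_of_rank_eq_card_width (by simpa using hFhat_rank),
      rank_transpose, hEhat_rank]
  · exact (linearIndependent_col_of_rank_eq (by simpa using hEhat_rank)).ne_zero

/-- in the one-step clustering setup on a spanning tree, if additionally
`rank F = n - 1`, then `rank Ê = n - 2`, `rank F̂ = n - 2`, the reduced Laplacian
`L̂ = Wᵀ L V = F̂ Êᵀ` has rank `n - 2`, and each column of `Ê` has exactly two nonzero
entries, equal to `1` and `-1` (so the reduced network again has a spanning tree as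
underlying undirected graph and satisfies the directed-rooted-spanning-tree rank
condition). -/
theorem clustered_network_spanning_tree
    (n : ℕ) (hn : 3 ≤ n)
    (a b : ℝ) (ha : 0 ≤ a) (hb : 0 ≤ b) (hab : 0 < a + b)
    (ε : ℝ) (hε : ε = 1 ∨ ε = -1)
    (E00 F00 : Matrix (Fin (n-2)) (Fin (n-2)) ℝ)
    (Ei0 Ej0 Fi0 Fj0 : Matrix (Fin 1) (Fin (n-2)) ℝ)
    (E F : Matrix (Fin (n-2) ⊕ (Fin 1 ⊕ Fin 1)) (Fin (n-2) ⊕ Fin 1) ℝ)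
    (hE : E = Matrix.fromBlocks E00 0 (Matrix.fromRows Ei0 Ej0)
      (Matrix.fromRows (ε • (1 : Matrix (Fin 1) (Fin 1) ℝ))
        ((-ε) • (1 : Matrix (Fin 1) (Fin 1) ℝ))))
    (hF : F = Matrix.fromBlocks F00 0 (Matrix.fromRows Fi0 Fj0)
      (Matrix.fromRows ((a * ε) • (1 : Matrix (Fin 1) (Fin 1) ℝ))
        ((-(b * ε)) • (1 : Matrix (Fin 1) (Fin 1) ℝ))))
    -- E is an incidence matrix: each column has exactly two nonzero entries, 1 and -1
    (hEcols : ∀ l, ∃ i j, i ≠ j ∧ E i l = 1 ∧ E j l = -1 ∧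
      ∀ i', i' ≠ i → i' ≠ j → E i' l = 0)
    -- spanning tree and directed-rooted-spanning-tree conditions
    (hrankE : E.rank = n - 1)
    (hrankF : F.rank = n - 1)
    (L : Matrix (Fin (n-2) ⊕ (Fin 1 ⊕ Fin 1)) (Fin (n-2) ⊕ (Fin 1 ⊕ Fin 1)) ℝ)
    (hL : L = F * Eᵀ)
    (V W : Matrix (Fin (n-2) ⊕ (Fin 1 ⊕ Fin 1)) (Fin (n-2) ⊕ Fin 1) ℝ)
    (hV : V = Matrix.fromBlocks 1 0 0
      (Matrix.fromRows (1 : Matrix (Fin 1) (Fin 1) ℝ) (1 : Matrix (Fin 1) (Fin 1) ℝ)))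
    (hW : W = Matrix.fromBlocks 1 0 0
      (Matrix.fromRows ((b / (a + b)) • (1 : Matrix (Fin 1) (Fin 1) ℝ))
        ((a / (a + b)) • (1 : Matrix (Fin 1) (Fin 1) ℝ))))
    (Ehat Fhat : Matrix (Fin (n-2) ⊕ Fin 1) (Fin (n-2)) ℝ)
    (hEhat : Ehat = Matrix.fromRows E00 (Ei0 + Ej0))
    (hFhat : Fhat = Matrix.fromRows F00
      ((b / (a + b)) • Fi0 + (a / (a + b)) • Fj0))
    (Lhat : Matrix (Fin (n-2) ⊕ Fin 1) (Fin (n-2) ⊕ Fin 1) ℝ)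
    (hLhat : Lhat = Wᵀ * L * V) :
    Ehat.rank = n - 2 ∧ Fhat.rank = n - 2 ∧
    Lhat = Fhat * Ehatᵀ ∧ Lhat.rank = n - 2 ∧
    ∀ l, ∃ i j, i ≠ j ∧ Ehat i l = 1 ∧ Ehat j l = -1 ∧
      ∀ i', i' ≠ i → i' ≠ j → Ehat i' l = 0 :=
  clustered_network_spanning_tree_general n hn a b hab ε E00 F00 Ei0 Ej0 Fi0 Fj0 E F hE hF hEcols
    hrankE hrankF L hL V W hV hW Ehat Fhat hEhat hFhat Lhat hLhat
end

section
/- In the one-step clustering setup on a spanning tree (n ≥ 3 vertices, weights w_{ij} ≥ 0, last edge connecting vertices n−1 and n with w_{ij} + w_{ji} > 0), partition the edge Laplacian L_e = EᵀF ∈ ℝ^{(n−1)×(n−1)} as L_e = [[L_{e,11}, L_{e,12}],[L_{e,21}, L_{e,22}]] where L_{e,22} ∈ ℝ is the last diagonal entry; then L_{e,22} = w_{ij} + w_{ji} ≠ 0, and the reduced edge Laplacian satisfies the Schur-complement formula L̂_e := ÊᵀF̂ = L_{e,11} − L_{e,12} L_{e,22}^{−1} L_{e,21}. -/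
/-!
Writing `E` and `F` in block form, `L_e = EᵀF` has last diagonal block `ε² (w_ij + w_ji) = w_ij + w_ji`,
off-diagonal blocks `ε (w_ij E_{i0}ᵀ - w_ji E_{j0}ᵀ)` and `ε (F_{i0} - F_{j0})`, and leading block
`E₀₀ᵀF₀₀ + E_{i0}ᵀF_{i0} + E_{j0}ᵀF_{j0}`. Subtracting the rank-one correction and expanding, each of
the four products `E_{·0}ᵀ F_{·0}` ends up with exactly the coefficient it has in `ÊᵀF̂`.
-/

open Matrix

variable {R : Type*} [CommRing R] {m n o : Type*} [DecidableEq o]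

def edgeBlocks (M₀₀ : Matrix m n R) (Mᵢ₀ Mⱼ₀ : Matrix o n R) (p q : R) :
    Matrix (m ⊕ (o ⊕ o)) (n ⊕ o) R :=
  fromBlocks M₀₀ 0 (fromRows Mᵢ₀ Mⱼ₀) (fromRows (p • 1) (q • 1))

variable [Fintype m] [Fintype o]

theorem edgeBlocks_transpose_mul {l : Type*} (E₀₀ : Matrix m l R) (Eᵢ₀ Eⱼ₀ : Matrix o l R)
    (F₀₀ : Matrix m n R) (Fᵢ₀ Fⱼ₀ : Matrix o n R) (p q r s : R) :
    (edgeBlocks E₀₀ Eᵢ₀ Eⱼ₀ p q)ᵀ * edgeBlocks F₀₀ Fᵢ₀ Fⱼ₀ r s =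
      fromBlocks (E₀₀ᵀ * F₀₀ + (Eᵢ₀ᵀ * Fᵢ₀ + Eⱼ₀ᵀ * Fⱼ₀)) (r • Eᵢ₀ᵀ + s • Eⱼ₀ᵀ)
        (p • Fᵢ₀ + q • Fⱼ₀) ((p * r + q * s) • 1) := by
  simp [edgeBlocks, fromBlocks_transpose, fromBlocks_multiply, transpose_fromRows,
    fromCols_mul_fromRows, smul_smul, mul_comm, add_smul]

theorem edgeLaplacian_schur_eq_clustered {K : Type*} [Field K] {l : Type*}
    (E₀₀ : Matrix m l K) (Eᵢ₀ Eⱼ₀ : Matrix o l K) (F₀₀ : Matrix m n K) (Fᵢ₀ Fⱼ₀ : Matrix o n K)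
    {a b ε : K} (hab : a + b ≠ 0) (hε : ε * ε = 1) :
    E₀₀ᵀ * F₀₀ + (Eᵢ₀ᵀ * Fᵢ₀ + Eⱼ₀ᵀ * Fⱼ₀) -
        ((a * ε) • Eᵢ₀ᵀ + (-(b * ε)) • Eⱼ₀ᵀ) * ((a + b) • (1 : Matrix o o K))⁻¹ *
          (ε • Fᵢ₀ + (-ε) • Fⱼ₀) =
      (fromRows E₀₀ (Eᵢ₀ + Eⱼ₀))ᵀ * fromRows F₀₀ ((b / (a + b)) • Fᵢ₀ + (a / (a + b)) • Fⱼ₀) := by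
  have hinv : ((a + b) • (1 : Matrix o o K))⁻¹ = (a + b)⁻¹ • 1 :=
    inv_eq_right_inv (by rw [smul_mul_smul_comm, one_mul, mul_inv_cancel₀ hab, one_smul])
  rw [hinv, transpose_fromRows, fromCols_mul_fromRows, transpose_add]
  simp only [Matrix.add_mul, Matrix.mul_add, Matrix.smul_mul, Matrix.mul_smul, Matrix.mul_one,
    smul_smul]
  match_scalars <;> field_simp <;> grind

theorem clustered_edge_laplacian_schur_general
    (n : ℕ)
    (a b : ℝ) (hab : 0 < a + b)
    (ε : ℝ) (hε : ε = 1 ∨ ε = -1)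
    (E00 F00 : Matrix (Fin (n-2)) (Fin (n-2)) ℝ)
    (Ei0 Ej0 Fi0 Fj0 : Matrix (Fin 1) (Fin (n-2)) ℝ)
    (E F : Matrix (Fin (n-2) ⊕ (Fin 1 ⊕ Fin 1)) (Fin (n-2) ⊕ Fin 1) ℝ)
    (hE : E = Matrix.fromBlocks E00 0 (Matrix.fromRows Ei0 Ej0)
      (Matrix.fromRows (ε • (1 : Matrix (Fin 1) (Fin 1) ℝ))
        ((-ε) • (1 : Matrix (Fin 1) (Fin 1) ℝ))))
    (hF : F = Matrix.fromBlocks F00 0 (Matrix.fromRows Fi0 Fj0)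
      (Matrix.fromRows ((a * ε) • (1 : Matrix (Fin 1) (Fin 1) ℝ))
        ((-(b * ε)) • (1 : Matrix (Fin 1) (Fin 1) ℝ))))
    -- the edge Laplacian
    (Le : Matrix (Fin (n-2) ⊕ Fin 1) (Fin (n-2) ⊕ Fin 1) ℝ)
    (hLe : Le = Eᵀ * F)
    -- the clustered incidence-type matrices
    (Ehat Fhat : Matrix (Fin (n-2) ⊕ Fin 1) (Fin (n-2)) ℝ)
    (hEhat : Ehat = Matrix.fromRows E00 (Ei0 + Ej0))
    (hFhat : Fhat = Matrix.fromRows F00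
      ((b / (a + b)) • Fi0 + (a / (a + b)) • Fj0)) :
    Le.toBlocks₂₂ = (a + b) • (1 : Matrix (Fin 1) (Fin 1) ℝ) ∧
    a + b ≠ 0 ∧
    Ehatᵀ * Fhat = Le.toBlocks₁₁ - Le.toBlocks₁₂ * (Le.toBlocks₂₂)⁻¹ * Le.toBlocks₂₁ := by
  have hε_sq : ε * ε = 1 := by rcases hε with rfl | rfl <;> norm_num
  have hLe_blocks : Le = fromBlocks (E00ᵀ * F00 + (Ei0ᵀ * Fi0 + Ej0ᵀ * Fj0))
      ((a * ε) • Ei0ᵀ + (-(b * ε)) • Ej0ᵀ) (ε • Fi0 + (-ε) • Fj0) ((a + b) • 1) := by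
    rw [hLe, hE, hF]
    refine (edgeBlocks_transpose_mul E00 Ei0 Ej0 F00 Fi0 Fj0 _ _ _ _).trans ?_
    congr 2
    linear_combination (a + b) * hε_sq
  subst hLe_blocks hEhat hFhat
  rw [toBlocks_fromBlocks₁₁, toBlocks_fromBlocks₁₂, toBlocks_fromBlocks₂₁,
    toBlocks_fromBlocks₂₂]
  exact ⟨rfl, hab.ne', (edgeLaplacian_schur_eq_clustered _ _ _ _ _ _ hab.ne' hε_sq).symm⟩

/-- in the one-step clustering setup, the (2,2) block of the edge Laplacian
`L_e = EᵀF` is the scalar `w_ij + w_ji ≠ 0`, and the reduced edge Laplacian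
`L̂_e = ÊᵀF̂` is the Schur complement `L_{e,11} - L_{e,12} L_{e,22}⁻¹ L_{e,21}`. -/
theorem clustered_edge_laplacian_schur
    (n : ℕ) (hn : 3 ≤ n)
    (a b : ℝ) (ha : 0 ≤ a) (hb : 0 ≤ b) (hab : 0 < a + b)
    (ε : ℝ) (hε : ε = 1 ∨ ε = -1)
    (E00 F00 : Matrix (Fin (n-2)) (Fin (n-2)) ℝ)
    (Ei0 Ej0 Fi0 Fj0 : Matrix (Fin 1) (Fin (n-2)) ℝ)
    (E F : Matrix (Fin (n-2) ⊕ (Fin 1 ⊕ Fin 1)) (Fin (n-2) ⊕ Fin 1) ℝ)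
    (hE : E = Matrix.fromBlocks E00 0 (Matrix.fromRows Ei0 Ej0)
      (Matrix.fromRows (ε • (1 : Matrix (Fin 1) (Fin 1) ℝ))
        ((-ε) • (1 : Matrix (Fin 1) (Fin 1) ℝ))))
    (hF : F = Matrix.fromBlocks F00 0 (Matrix.fromRows Fi0 Fj0)
      (Matrix.fromRows ((a * ε) • (1 : Matrix (Fin 1) (Fin 1) ℝ))
        ((-(b * ε)) • (1 : Matrix (Fin 1) (Fin 1) ℝ))))
    (hrankE : E.rank = n - 1)
    -- the edge Laplacian
    (Le : Matrix (Fin (n-2) ⊕ Fin 1) (Fin (n-2) ⊕ Fin 1) ℝ)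
    (hLe : Le = Eᵀ * F)
    -- the clustered incidence-type matrices
    (Ehat Fhat : Matrix (Fin (n-2) ⊕ Fin 1) (Fin (n-2)) ℝ)
    (hEhat : Ehat = Matrix.fromRows E00 (Ei0 + Ej0))
    (hFhat : Fhat = Matrix.fromRows F00
      ((b / (a + b)) • Fi0 + (a / (a + b)) • Fj0)) :
    Le.toBlocks₂₂ = (a + b) • (1 : Matrix (Fin 1) (Fin 1) ℝ) ∧
    a + b ≠ 0 ∧
    Ehatᵀ * Fhat = Le.toBlocks₁₁ - Le.toBlocks₁₂ * (Le.toBlocks₂₂)⁻¹ * Le.toBlocks₂₁ :=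
  clustered_edge_laplacian_schur_general n a b hab ε hε E00 F00 Ei0 Ej0 Fi0 Fj0 E F hE hF Le hLe
    Ehat Fhat hEhat hFhat
end

section
/- In the one-step clustering setup on a spanning tree (n ≥ 3 vertices, weights w_{ij} ≥ 0, last edge connecting vertices n−1 and n with w_{ij} + w_{ji} > 0), let G ∈ ℝ^{n×q} and H ∈ ℝ^{p×n}, and partition G_e := EᵀG = [G_{e,1}; G_{e,2}] (G_{e,2} ∈ ℝ^{1×q} the last row), H_f := HF = [H_{f,1}, H_{f,2}] (H_{f,2} ∈ ℝ^{p×1} the last column), and L_e := EᵀF = [[L_{e,11}, L_{e,12}],[L_{e,21}, L_{e,22}]] with scalar L_{e,22} = w_{ij} + w_{ji}. Then the reduced matrices satisfy Ĝ_e := ÊᵀWᵀG = G_{e,1} − L_{e,12} L_{e,22}^{−1} G_{e,2} and Ĥ_f := H V F̂ = H_{f,1} − H_{f,2} L_{e,22}^{−1} L_{e,21}. -/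
/-!
Write `E = [[E₀, 0], [Eᵣ, e]]`, `F = [[F₀, 0], [Fᵣ, f]]` with `e, f` the columns of the clustered
edge, and `v = [1; 1]`, `w` the weight column of the clustering. Multiplying out the blocks, both
identities reduce to the single `2 × 2` identity `v wᵀ = I - f (eᵀ f)⁻¹ eᵀ`: the oblique projection
onto `ker eᵀ = span v` along `f` has rank one and is `v wᵀ`, because `wᵀ v = 1` and `wᵀ f = 0`.
-/

open Matrix

namespace Matrix

section Clustering

variable {R : Type*} [CommRing R] {m m' k o l p : Type*}
  [Fintype m] [Fintype k] [Fintype o] [DecidableEq m] [DecidableEq k] [DecidableEq o]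

theorem clustered_input_eq_schur (E₀ F₀ : Matrix m m' R) (Eᵣ Fᵣ : Matrix k m' R)
    (e f v w : Matrix k o R) (G : Matrix (m ⊕ k) l R)
    (hvw : v * wᵀ = 1 - f * (eᵀ * f)⁻¹ * eᵀ) :
    (fromRows E₀ (vᵀ * Eᵣ))ᵀ * ((fromBlocks (1 : Matrix m m R) 0 0 w)ᵀ * G) =
      ((fromBlocks E₀ 0 Eᵣ e)ᵀ * G).toRows₁ -
        ((fromBlocks E₀ 0 Eᵣ e)ᵀ * fromBlocks F₀ 0 Fᵣ f).toBlocks₁₂ *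
          ((fromBlocks E₀ 0 Eᵣ e)ᵀ * fromBlocks F₀ 0 Fᵣ f).toBlocks₂₂⁻¹ *
          ((fromBlocks E₀ 0 Eᵣ e)ᵀ * G).toRows₂ := by
  rw [← fromRows_toRows G]
  simp only [fromBlocks_transpose, transpose_fromRows, fromBlocks_mul_fromRows,
    fromBlocks_multiply, fromCols_mul_fromRows, toRows₁_fromRows, toRows₂_fromRows,
    toBlocks_fromBlocks₁₂, toBlocks_fromBlocks₂₂, transpose_zero, transpose_one, Matrix.zero_mul,
    Matrix.mul_zero, Matrix.one_mul, add_zero, zero_add]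
  rw [transpose_mul, transpose_transpose, Matrix.mul_assoc, ← Matrix.mul_assoc v, hvw]
  simp only [Matrix.sub_mul, Matrix.mul_sub, Matrix.one_mul, Matrix.mul_assoc]
  abel

theorem clustered_output_eq_schur (E₀ F₀ : Matrix m m' R) (Eᵣ Fᵣ : Matrix k m' R)
    (e f v w : Matrix k o R) (H : Matrix p (m ⊕ k) R)
    (hvw : v * wᵀ = 1 - f * (eᵀ * f)⁻¹ * eᵀ) :
    H * fromBlocks (1 : Matrix m m R) 0 0 v * fromRows F₀ (wᵀ * Fᵣ) =
      (H * fromBlocks F₀ 0 Fᵣ f).toCols₁ -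
        (H * fromBlocks F₀ 0 Fᵣ f).toCols₂ *
          ((fromBlocks E₀ 0 Eᵣ e)ᵀ * fromBlocks F₀ 0 Fᵣ f).toBlocks₂₂⁻¹ *
          ((fromBlocks E₀ 0 Eᵣ e)ᵀ * fromBlocks F₀ 0 Fᵣ f).toBlocks₂₁ := by
  rw [← fromCols_toCols H]
  simp only [fromBlocks_transpose, fromCols_mul_fromBlocks, fromBlocks_multiply,
    fromCols_mul_fromRows, toCols₁_fromCols, toCols₂_fromCols, toBlocks_fromBlocks₂₁,
    toBlocks_fromBlocks₂₂, transpose_zero, Matrix.zero_mul, Matrix.mul_zero, Matrix.mul_one,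
    add_zero, zero_add]
  rw [Matrix.mul_assoc, ← Matrix.mul_assoc v, hvw]
  simp only [Matrix.sub_mul, Matrix.mul_sub, Matrix.one_mul, Matrix.mul_assoc]
  abel

end Clustering

section EdgePair

variable {K : Type*} [Field K] {o : Type*} [Fintype o] [DecidableEq o]

theorem transpose_fromRows_smul_one_mul_fromRows_smul_one (x y x' y' : K) :
    (fromRows (x • 1 : Matrix o o K) (y • 1 : Matrix o o K))ᵀ *
        fromRows (x' • 1 : Matrix o o K) (y' • 1 : Matrix o o K) =
      (x * x' + y * y') • (1 : Matrix o o K) := by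
  simp only [transpose_fromRows, fromCols_mul_fromRows, transpose_smul, transpose_one,
    smul_mul_smul_comm, Matrix.one_mul, add_smul]

theorem inv_smul_one {c : K} (hc : c ≠ 0) : (c • (1 : Matrix o o K))⁻¹ = c⁻¹ • 1 :=
  inv_eq_left_inv (by rw [smul_mul_smul_comm, Matrix.one_mul, inv_mul_cancel₀ hc, one_smul])

theorem fromRows_one_mul_transpose_eq_one_sub_projection {a b ε : K} (hε : ε * ε = 1)
    (hab : a + b ≠ 0) :
    let e := fromRows (ε • 1 : Matrix o o K) ((-ε) • 1 : Matrix o o K)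
    let f := fromRows ((a * ε) • 1 : Matrix o o K) ((-(b * ε)) • 1 : Matrix o o K)
    fromRows (1 : Matrix o o K) (1 : Matrix o o K) *
        (fromRows ((b / (a + b)) • 1 : Matrix o o K) ((a / (a + b)) • 1 : Matrix o o K))ᵀ =
      1 - f * (eᵀ * f)⁻¹ * eᵀ := by
  intro e f
  have hef : ε * (a * ε) + -ε * -(b * ε) = a + b := by linear_combination (a + b) * hε
  rw [transpose_fromRows_smul_one_mul_fromRows_smul_one, hef, inv_smul_one hab]
  ext (i | i) (j | j) <;>
    simp only [e, f, transpose_fromRows, transpose_smul, transpose_neg, transpose_one,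
      mul_fromCols, Matrix.mul_smul, Matrix.mul_neg, Matrix.mul_one, smul_mul, fromCols_apply_inl,
      fromCols_apply_inr, fromRows_apply_inl, fromRows_apply_inr, sub_apply, neg_apply, smul_apply,
      one_apply, smul_eq_mul, neg_smul, Sum.inl.injEq, Sum.inr.injEq, reduceCtorEq, if_false] <;>
    split_ifs <;> field_simp <;> grind

end EdgePair

end Matrix

theorem clustered_edge_io_schur_general
    (n q p : ℕ)
    (a b : ℝ) (hab : 0 < a + b)
    (ε : ℝ) (hε : ε = 1 ∨ ε = -1)
    (E00 F00 : Matrix (Fin (n-2)) (Fin (n-2)) ℝ)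
    (Ei0 Ej0 Fi0 Fj0 : Matrix (Fin 1) (Fin (n-2)) ℝ)
    (E F : Matrix (Fin (n-2) ⊕ (Fin 1 ⊕ Fin 1)) (Fin (n-2) ⊕ Fin 1) ℝ)
    (hE : E = Matrix.fromBlocks E00 0 (Matrix.fromRows Ei0 Ej0)
      (Matrix.fromRows (ε • (1 : Matrix (Fin 1) (Fin 1) ℝ))
        ((-ε) • (1 : Matrix (Fin 1) (Fin 1) ℝ))))
    (hF : F = Matrix.fromBlocks F00 0 (Matrix.fromRows Fi0 Fj0)
      (Matrix.fromRows ((a * ε) • (1 : Matrix (Fin 1) (Fin 1) ℝ))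
        ((-(b * ε)) • (1 : Matrix (Fin 1) (Fin 1) ℝ))))
    -- external input and output distribution matrices
    (G : Matrix (Fin (n-2) ⊕ (Fin 1 ⊕ Fin 1)) (Fin q) ℝ)
    (H : Matrix (Fin p) (Fin (n-2) ⊕ (Fin 1 ⊕ Fin 1)) ℝ)
    -- the edge Laplacian and the partitioned edge input/output matrices
    (Le : Matrix (Fin (n-2) ⊕ Fin 1) (Fin (n-2) ⊕ Fin 1) ℝ)
    (hLe : Le = Eᵀ * F)
    (Ge1 : Matrix (Fin (n-2)) (Fin q) ℝ) (hGe1 : Ge1 = (Eᵀ * G).submatrix Sum.inl id)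
    (Ge2 : Matrix (Fin 1) (Fin q) ℝ) (hGe2 : Ge2 = (Eᵀ * G).submatrix Sum.inr id)
    (Hf1 : Matrix (Fin p) (Fin (n-2)) ℝ) (hHf1 : Hf1 = (H * F).submatrix id Sum.inl)
    (Hf2 : Matrix (Fin p) (Fin 1) ℝ) (hHf2 : Hf2 = (H * F).submatrix id Sum.inr)
    -- the clustering projection matrices and clustered matrices
    (V W : Matrix (Fin (n-2) ⊕ (Fin 1 ⊕ Fin 1)) (Fin (n-2) ⊕ Fin 1) ℝ)
    (hV : V = Matrix.fromBlocks 1 0 0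
      (Matrix.fromRows (1 : Matrix (Fin 1) (Fin 1) ℝ) (1 : Matrix (Fin 1) (Fin 1) ℝ)))
    (hW : W = Matrix.fromBlocks 1 0 0
      (Matrix.fromRows ((b / (a + b)) • (1 : Matrix (Fin 1) (Fin 1) ℝ))
        ((a / (a + b)) • (1 : Matrix (Fin 1) (Fin 1) ℝ))))
    (Ehat Fhat : Matrix (Fin (n-2) ⊕ Fin 1) (Fin (n-2)) ℝ)
    (hEhat : Ehat = Matrix.fromRows E00 (Ei0 + Ej0))
    (hFhat : Fhat = Matrix.fromRows F00
      ((b / (a + b)) • Fi0 + (a / (a + b)) • Fj0)) :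
    Ehatᵀ * (Wᵀ * G) = Ge1 - Le.toBlocks₁₂ * (Le.toBlocks₂₂)⁻¹ * Ge2 ∧
    H * V * Fhat = Hf1 - Hf2 * (Le.toBlocks₂₂)⁻¹ * Le.toBlocks₂₁ := by
  have hεε : ε * ε = 1 := by rcases hε with rfl | rfl <;> norm_num
  have hvw := fromRows_one_mul_transpose_eq_one_sub_projection (o := Fin 1) hεε hab.ne'
  have hEhat_v : Ehat = fromRows E00
      ((fromRows (1 : Matrix (Fin 1) (Fin 1) ℝ) (1 : Matrix (Fin 1) (Fin 1) ℝ))ᵀ *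
        fromRows Ei0 Ej0) := by
    rw [hEhat, transpose_fromRows, fromCols_mul_fromRows, transpose_one, Matrix.one_mul,
      Matrix.one_mul]
  have hFhat_w : Fhat = fromRows F00
      ((fromRows ((b / (a + b)) • (1 : Matrix (Fin 1) (Fin 1) ℝ))
        ((a / (a + b)) • (1 : Matrix (Fin 1) (Fin 1) ℝ)))ᵀ * fromRows Fi0 Fj0) := by
    rw [hFhat, transpose_fromRows, fromCols_mul_fromRows, transpose_smul, transpose_smul,
      transpose_one, Matrix.smul_mul, Matrix.smul_mul, Matrix.one_mul, Matrix.one_mul]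
  subst hE hF hLe hGe1 hGe2 hHf1 hHf2 hV hW hEhat_v hFhat_w
  exact ⟨clustered_input_eq_schur _ _ _ _ _ _ _ _ G hvw,
    clustered_output_eq_schur _ _ _ _ _ _ _ _ H hvw⟩

/-- in the one-step clustering setup, the reduced input and output matrices
of the (dual) edge system are Schur complements:
`Ĝ_e = ÊᵀWᵀG = G_{e,1} - L_{e,12} L_{e,22}⁻¹ G_{e,2}` and
`Ĥ_f = H V F̂ = H_{f,1} - H_{f,2} L_{e,22}⁻¹ L_{e,21}`. -/
theorem clustered_edge_io_schur
    (n q p : ℕ) (hn : 3 ≤ n)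
    (a b : ℝ) (ha : 0 ≤ a) (hb : 0 ≤ b) (hab : 0 < a + b)
    (ε : ℝ) (hε : ε = 1 ∨ ε = -1)
    (E00 F00 : Matrix (Fin (n-2)) (Fin (n-2)) ℝ)
    (Ei0 Ej0 Fi0 Fj0 : Matrix (Fin 1) (Fin (n-2)) ℝ)
    (E F : Matrix (Fin (n-2) ⊕ (Fin 1 ⊕ Fin 1)) (Fin (n-2) ⊕ Fin 1) ℝ)
    (hE : E = Matrix.fromBlocks E00 0 (Matrix.fromRows Ei0 Ej0)
      (Matrix.fromRows (ε • (1 : Matrix (Fin 1) (Fin 1) ℝ))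
        ((-ε) • (1 : Matrix (Fin 1) (Fin 1) ℝ))))
    (hF : F = Matrix.fromBlocks F00 0 (Matrix.fromRows Fi0 Fj0)
      (Matrix.fromRows ((a * ε) • (1 : Matrix (Fin 1) (Fin 1) ℝ))
        ((-(b * ε)) • (1 : Matrix (Fin 1) (Fin 1) ℝ))))
    (hrankE : E.rank = n - 1)
    -- external input and output distribution matrices
    (G : Matrix (Fin (n-2) ⊕ (Fin 1 ⊕ Fin 1)) (Fin q) ℝ)
    (H : Matrix (Fin p) (Fin (n-2) ⊕ (Fin 1 ⊕ Fin 1)) ℝ)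
    -- the edge Laplacian and the partitioned edge input/output matrices
    (Le : Matrix (Fin (n-2) ⊕ Fin 1) (Fin (n-2) ⊕ Fin 1) ℝ)
    (hLe : Le = Eᵀ * F)
    (Ge1 : Matrix (Fin (n-2)) (Fin q) ℝ) (hGe1 : Ge1 = (Eᵀ * G).submatrix Sum.inl id)
    (Ge2 : Matrix (Fin 1) (Fin q) ℝ) (hGe2 : Ge2 = (Eᵀ * G).submatrix Sum.inr id)
    (Hf1 : Matrix (Fin p) (Fin (n-2)) ℝ) (hHf1 : Hf1 = (H * F).submatrix id Sum.inl)
    (Hf2 : Matrix (Fin p) (Fin 1) ℝ) (hHf2 : Hf2 = (H * F).submatrix id Sum.inr)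
    -- the clustering projection matrices and clustered matrices
    (V W : Matrix (Fin (n-2) ⊕ (Fin 1 ⊕ Fin 1)) (Fin (n-2) ⊕ Fin 1) ℝ)
    (hV : V = Matrix.fromBlocks 1 0 0
      (Matrix.fromRows (1 : Matrix (Fin 1) (Fin 1) ℝ) (1 : Matrix (Fin 1) (Fin 1) ℝ)))
    (hW : W = Matrix.fromBlocks 1 0 0
      (Matrix.fromRows ((b / (a + b)) • (1 : Matrix (Fin 1) (Fin 1) ℝ))
        ((a / (a + b)) • (1 : Matrix (Fin 1) (Fin 1) ℝ))))
    (Ehat Fhat : Matrix (Fin (n-2) ⊕ Fin 1) (Fin (n-2)) ℝ)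
    (hEhat : Ehat = Matrix.fromRows E00 (Ei0 + Ej0))
    (hFhat : Fhat = Matrix.fromRows F00
      ((b / (a + b)) • Fi0 + (a / (a + b)) • Fj0)) :
    Ehatᵀ * (Wᵀ * G) = Ge1 - Le.toBlocks₁₂ * (Le.toBlocks₂₂)⁻¹ * Ge2 ∧
    H * V * Fhat = Hf1 - Hf2 * (Le.toBlocks₂₂)⁻¹ * Le.toBlocks₂₁ :=
  clustered_edge_io_schur_general n q p a b hab ε hε E00 F00 Ei0 Ej0 Fi0 Fj0 E F hE hF G H Le hLe
    Ge1 hGe1 Ge2 hGe2 Hf1 hHf1 Hf2 hHf2 V W hV hW Ehat Fhat hEhat hFhat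
end

section
/- Let q ≥ 2, let L_e ∈ ℝ^{q×q} be partitioned as [[L_{11}, L_{12}],[L_{21}, L_{22}]] with L_{22} ∈ ℝ a nonzero scalar (last diagonal entry), and let G_e ∈ ℝ^{q×r} be partitioned as [G_1; G_2] with G_2 its last row. Let Π^c = diag(π_1, …, π_q) be diagonal positive semidefinite and suppose L_eΠ^c + Π^c L_eᵀ − G_eG_eᵀ ⪰ 0. Define L̂_e = L_{11} − L_{12}L_{22}^{−1}L_{21}, Ĝ_e = G_1 − L_{12}L_{22}^{−1}G_2, and Π^c_1 = diag(π_1, …, π_{q−1}). Then L̂_eΠ^c_1 + Π^c_1 L̂_eᵀ − Ĝ_eĜ_eᵀ ⪰ 0; i.e., the truncated diagonal matrix Π^c_1 is a generalized edge controllability Gramian certificate for the one-step clustered (Schur-reduced) system. -/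
/-!
Left multiplication by `T = [1, -L₁₂ L₂₂⁻¹]` performs one step of Gaussian elimination:
`T L = [L̂, 0]` and `T G = Ĝ`. For a block-diagonal `Π` this turns the congruence
`T (L Π + Π Lᵀ - G Gᵀ) Tᵀ` into `L̂ Π₁ + Π₁ L̂ᵀ - Ĝ Ĝᵀ`, and congruence preserves
positive semidefiniteness.
-/

open Matrix

namespace Matrix

variable {m n o R : Type*}

theorem IsDiag.fromBlocks_toBlocks_eq [Zero R] {P : Matrix (m ⊕ n) (m ⊕ n) R} (hP : P.IsDiag) :
    Matrix.fromBlocks P.toBlocks₁₁ 0 0 P.toBlocks₂₂ = P := by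
  obtain ⟨-, h₁₂, h₂₁, -⟩ := isDiag_fromBlocks_iff.mp ((fromBlocks_toBlocks P).symm ▸ hP)
  rw [← h₁₂, ← h₂₁, fromBlocks_toBlocks]

section BlockDiagonal

variable [Fintype m] [Fintype n] [DecidableEq m] [CommRing R]

theorem fromCols_zero_mul_fromBlocks_mul_fromCols_one_transpose (X : Matrix o m R)
    (P₁ : Matrix m m R) (P₂ : Matrix n n R) (B : Matrix m n R) :
    fromCols X (0 : Matrix o n R) * fromBlocks P₁ 0 0 P₂ * (fromCols (1 : Matrix m m R) B)ᵀ =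
      X * P₁ := by
  rw [fromCols_mul_fromBlocks, transpose_fromCols, fromCols_mul_fromRows]
  simp

theorem fromCols_one_mul_fromBlocks_mul_fromCols_zero_transpose (X : Matrix o m R)
    (P₁ : Matrix m m R) (P₂ : Matrix n n R) (B : Matrix m n R) :
    fromCols (1 : Matrix m m R) B * fromBlocks P₁ 0 0 P₂ * (fromCols X (0 : Matrix o n R))ᵀ =
      P₁ * Xᵀ := by
  rw [fromCols_mul_fromBlocks, transpose_fromCols, fromCols_mul_fromRows]
  simp

end BlockDiagonal

def gramianDefect [Fintype m] [Fintype o] [CommRing R] (L P : Matrix m m R) (G : Matrix m o R) :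
    Matrix m m R :=
  L * P + P * Lᵀ - G * Gᵀ

section SchurReduction

variable [Fintype m] [Fintype n] [DecidableEq m] [DecidableEq n] [CommRing R]

noncomputable def schurReducer (L : Matrix (m ⊕ n) (m ⊕ n) R) : Matrix m (m ⊕ n) R :=
  fromCols 1 (-(L.toBlocks₁₂ * L.toBlocks₂₂⁻¹))

theorem schurReducer_mul (L : Matrix (m ⊕ n) (m ⊕ n) R) (G : Matrix (m ⊕ n) o R) :
    schurReducer L * G = G.toRows₁ - L.toBlocks₁₂ * L.toBlocks₂₂⁻¹ * G.toRows₂ := by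
  rw [schurReducer, ← fromRows_toRows G, fromCols_mul_fromRows, toRows₁_fromRows,
    toRows₂_fromRows, Matrix.one_mul, Matrix.neg_mul, sub_eq_add_neg]

theorem schurReducer_mul_self {L : Matrix (m ⊕ n) (m ⊕ n) R} (hL : IsUnit L.toBlocks₂₂.det) :
    schurReducer L * L =
      fromCols (L.toBlocks₁₁ - L.toBlocks₁₂ * L.toBlocks₂₂⁻¹ * L.toBlocks₂₁) 0 := by
  obtain ⟨A, B, C, D, rfl⟩ : ∃ A B C D, L = fromBlocks A B C D :=
    ⟨_, _, _, _, (fromBlocks_toBlocks L).symm⟩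
  simp only [schurReducer, toBlocks_fromBlocks₁₁, toBlocks_fromBlocks₁₂, toBlocks_fromBlocks₂₁,
    toBlocks_fromBlocks₂₂] at hL ⊢
  rw [fromCols_mul_fromBlocks]
  simp [Matrix.mul_assoc, nonsing_inv_mul _ hL, sub_eq_add_neg]

theorem schurReducer_mul_gramianDefect_mul_transpose [Fintype o] {L : Matrix (m ⊕ n) (m ⊕ n) R}
    (hL : IsUnit L.toBlocks₂₂.det) (P₁ : Matrix m m R) (P₂ : Matrix n n R)
    (G : Matrix (m ⊕ n) o R) :
    schurReducer L * gramianDefect L (fromBlocks P₁ 0 0 P₂) G * (schurReducer L)ᵀ =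
      gramianDefect (L.toBlocks₁₁ - L.toBlocks₁₂ * L.toBlocks₂₂⁻¹ * L.toBlocks₂₁) P₁
        (schurReducer L * G) := by
  set Lhat := L.toBlocks₁₁ - L.toBlocks₁₂ * L.toBlocks₂₂⁻¹ * L.toBlocks₂₁
  set T := schurReducer L
  have hTL : T * L = fromCols Lhat 0 := schurReducer_mul_self hL
  have hL_term : T * (L * fromBlocks P₁ 0 0 P₂) * Tᵀ = Lhat * P₁ := by
    rw [← Matrix.mul_assoc, hTL]
    exact fromCols_zero_mul_fromBlocks_mul_fromCols_one_transpose ..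
  have hLt_term : T * (fromBlocks P₁ 0 0 P₂ * Lᵀ) * Tᵀ = P₁ * Lhatᵀ := by
    rw [← Matrix.mul_assoc, Matrix.mul_assoc _ Lᵀ, ← transpose_mul, hTL]
    exact fromCols_one_mul_fromBlocks_mul_fromCols_zero_transpose ..
  have hG_term : T * (G * Gᵀ) * Tᵀ = (T * G) * (T * G)ᵀ := by
    rw [transpose_mul, Matrix.mul_assoc, Matrix.mul_assoc, Matrix.mul_assoc]
  rw [gramianDefect, gramianDefect, Matrix.mul_sub, Matrix.mul_add, Matrix.sub_mul,
    Matrix.add_mul, hL_term, hLt_term, hG_term]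

theorem PosSemidef.gramianDefect_schurReduce [Fintype o] [PartialOrder R] [StarRing R] [TrivialStar R]
    {L : Matrix (m ⊕ n) (m ⊕ n) R} (hL : IsUnit L.toBlocks₂₂.det)
    {P₁ : Matrix m m R} {P₂ : Matrix n n R} {G : Matrix (m ⊕ n) o R}
    (hP : (gramianDefect L (fromBlocks P₁ 0 0 P₂) G).PosSemidef) :
    (gramianDefect (L.toBlocks₁₁ - L.toBlocks₁₂ * L.toBlocks₂₂⁻¹ * L.toBlocks₂₁) P₁
      (G.toRows₁ - L.toBlocks₁₂ * L.toBlocks₂₂⁻¹ * G.toRows₂)).PosSemidef := by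
  rw [← schurReducer_mul, ← schurReducer_mul_gramianDefect_mul_transpose hL,
    ← conjTranspose_eq_transpose_of_trivial]
  exact hP.mul_mul_conjTranspose_same _

end SchurReduction

end Matrix

theorem truncated_controllability_certificate_general
    (q r : ℕ)
    (Le : Matrix (Fin (q-1) ⊕ Fin 1) (Fin (q-1) ⊕ Fin 1) ℝ)
    (Ge : Matrix (Fin (q-1) ⊕ Fin 1) (Fin r) ℝ)
    -- the (2,2) entry of Le is a nonzero scalar
    (hL22 : Le (Sum.inr 0) (Sum.inr 0) ≠ 0)
    -- diagonal positive semidefinite Π^c satisfying the Gramian inequality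
    (Pc : Matrix (Fin (q-1) ⊕ Fin 1) (Fin (q-1) ⊕ Fin 1) ℝ)
    (hPcdiag : Pc.IsDiag)
    (hPc : (Le * Pc + Pc * Leᵀ - Ge * Geᵀ).PosSemidef)
    -- the Schur-reduced data and the truncated certificate
    (Lhat : Matrix (Fin (q-1)) (Fin (q-1)) ℝ)
    (hLhat : Lhat = Le.toBlocks₁₁ - Le.toBlocks₁₂ * (Le.toBlocks₂₂)⁻¹ * Le.toBlocks₂₁)
    (Ghat : Matrix (Fin (q-1)) (Fin r) ℝ)
    (hGhat : Ghat = Ge.submatrix Sum.inl id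
      - Le.toBlocks₁₂ * (Le.toBlocks₂₂)⁻¹ * Ge.submatrix Sum.inr id)
    (Pc1 : Matrix (Fin (q-1)) (Fin (q-1)) ℝ)
    (hPc1 : Pc1 = Pc.toBlocks₁₁) :
    (Lhat * Pc1 + Pc1 * Lhatᵀ - Ghat * Ghatᵀ).PosSemidef := by
  subst hLhat hGhat hPc1
  have hL : IsUnit Le.toBlocks₂₂.det := by
    rw [det_fin_one]
    exact hL22.isUnit
  rw [← hPcdiag.fromBlocks_toBlocks_eq] at hPc
  exact PosSemidef.gramianDefect_schurReduce hL hPc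

/-- truncation of a diagonal generalized edge controllability Gramian
certificate remains a certificate for the one-step clustered (Schur-reduced) system. -/
theorem truncated_controllability_certificate
    (q r : ℕ) (hq : 2 ≤ q)
    (Le : Matrix (Fin (q-1) ⊕ Fin 1) (Fin (q-1) ⊕ Fin 1) ℝ)
    (Ge : Matrix (Fin (q-1) ⊕ Fin 1) (Fin r) ℝ)
    -- the (2,2) entry of Le is a nonzero scalar
    (hL22 : Le (Sum.inr 0) (Sum.inr 0) ≠ 0)
    -- diagonal positive semidefinite Π^c satisfying the Gramian inequality
    (Pc : Matrix (Fin (q-1) ⊕ Fin 1) (Fin (q-1) ⊕ Fin 1) ℝ)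
    (hPcdiag : Pc.IsDiag) (hPcpsd : Pc.PosSemidef)
    (hPc : (Le * Pc + Pc * Leᵀ - Ge * Geᵀ).PosSemidef)
    -- the Schur-reduced data and the truncated certificate
    (Lhat : Matrix (Fin (q-1)) (Fin (q-1)) ℝ)
    (hLhat : Lhat = Le.toBlocks₁₁ - Le.toBlocks₁₂ * (Le.toBlocks₂₂)⁻¹ * Le.toBlocks₂₁)
    (Ghat : Matrix (Fin (q-1)) (Fin r) ℝ)
    (hGhat : Ghat = Ge.submatrix Sum.inl id
      - Le.toBlocks₁₂ * (Le.toBlocks₂₂)⁻¹ * Ge.submatrix Sum.inr id)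
    (Pc1 : Matrix (Fin (q-1)) (Fin (q-1)) ℝ)
    (hPc1 : Pc1 = Pc.toBlocks₁₁) :
    (Lhat * Pc1 + Pc1 * Lhatᵀ - Ghat * Ghatᵀ).PosSemidef :=
  truncated_controllability_certificate_general q r Le Ge hL22 Pc hPcdiag hPc Lhat hLhat Ghat hGhat
    Pc1 hPc1
end

section
/- Let q ≥ 2, let L_e ∈ ℝ^{q×q} be partitioned as [[L_{11}, L_{12}],[L_{21}, L_{22}]] with L_{22} ∈ ℝ a nonzero scalar (last diagonal entry), and let H_f ∈ ℝ^{p×q} be partitioned as [H_1, H_2] with H_2 its last column. Let Π^o = diag(π_1, …, π_q) be diagonal positive semidefinite and suppose L_eᵀΠ^o + Π^o L_e − H_fᵀH_f ⪰ 0. Define L̂_e = L_{11} − L_{12}L_{22}^{−1}L_{21}, Ĥ_f = H_1 − H_2 L_{22}^{−1} L_{21}, and Π^o_1 = diag(π_1, …, π_{q−1}). Then L̂_eᵀΠ^o_1 + Π^o_1 L̂_e − Ĥ_fᵀĤ_f ⪰ 0; i.e., the truncated diagonal matrix Π^o_1 is a generalized edge observability Gramian certificate for the one-step clustered (Schur-reduced)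 system. -/
/-!
Write `S = [I; -L₂₂⁻¹ L₂₁]`. Then `L S = [L̂; 0]` and `H S = Ĥ`, and because `Π` is diagonal
(so block diagonal and symmetric) `Sᵀ Π L S = Π₁ L̂`. Hence the congruence `Sᵀ (·) S` carries
`Lᵀ Π + Π L - Hᵀ H` to `L̂ᵀ Π₁ + Π₁ L̂ - Ĥᵀ Ĥ`, and congruence preserves positive semidefiniteness.
-/

open Matrix

namespace Matrix

section SchurReduction

variable {m n p R : Type*} [Fintype m] [Fintype n] [DecidableEq m] [DecidableEq n] [CommRing R]

def gramianResidual {ι : Type*} [Fintype ι] [Fintype p] (A P : Matrix ι ι R)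
    (H : Matrix p ι R) : Matrix ι ι R :=
  Aᵀ * P + P * A - Hᵀ * H

noncomputable def schurComplement₂₂ (A : Matrix (m ⊕ n) (m ⊕ n) R) : Matrix m m R :=
  A.toBlocks₁₁ - A.toBlocks₁₂ * A.toBlocks₂₂⁻¹ * A.toBlocks₂₁

noncomputable def schurEmbedding (A : Matrix (m ⊕ n) (m ⊕ n) R) : Matrix (m ⊕ n) m R :=
  fromRows 1 (-(A.toBlocks₂₂⁻¹ * A.toBlocks₂₁))

theorem mul_schurEmbedding {A : Matrix (m ⊕ n) (m ⊕ n) R} (hA : IsUnit A.toBlocks₂₂.det) :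
    A * schurEmbedding A = fromRows (schurComplement₂₂ A) 0 := by
  rw [schurEmbedding]
  conv_lhs => arg 1; rw [← fromBlocks_toBlocks A]
  rw [fromBlocks_mul_fromRows, fromRows_ext_iff]
  constructor
  · rw [Matrix.mul_one, Matrix.mul_neg, ← Matrix.mul_assoc, ← sub_eq_add_neg, schurComplement₂₂]
  · rw [Matrix.mul_neg, ← Matrix.mul_assoc, mul_nonsing_inv _ hA, Matrix.one_mul,
      Matrix.mul_one, add_neg_cancel]

theorem mul_schurEmbedding_eq (H : Matrix p (m ⊕ n) R) (A : Matrix (m ⊕ n) (m ⊕ n) R) :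
    H * schurEmbedding A =
      H.submatrix id Sum.inl - H.submatrix id Sum.inr * A.toBlocks₂₂⁻¹ * A.toBlocks₂₁ := by
  rw [schurEmbedding]
  conv_lhs => arg 1; rw [← fromCols_toCols H]
  rw [fromCols_mul_fromRows, Matrix.mul_one, Matrix.mul_neg, ← Matrix.mul_assoc,
    ← sub_eq_add_neg]
  rfl

theorem schurEmbedding_transpose_mul_mul {A P : Matrix (m ⊕ n) (m ⊕ n) R}
    (hA : IsUnit A.toBlocks₂₂.det) (hP₂₁ : P.toBlocks₂₁ = 0) :
    (schurEmbedding A)ᵀ * (P * A) * schurEmbedding A = P.toBlocks₁₁ * schurComplement₂₂ A := by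
  conv_lhs => rw [Matrix.mul_assoc, Matrix.mul_assoc, mul_schurEmbedding hA]
  conv_lhs => arg 2; rw [← fromBlocks_toBlocks P]
  rw [fromBlocks_mul_fromRows, hP₂₁, schurEmbedding, transpose_fromRows, fromCols_mul_fromRows]
  simp

theorem schurEmbedding_transpose_mul_gramianResidual_mul [Fintype p] {A P : Matrix (m ⊕ n) (m ⊕ n) R}
    (H : Matrix p (m ⊕ n) R) (hA : IsUnit A.toBlocks₂₂.det) (hP : P.IsSymm)
    (hP₂₁ : P.toBlocks₂₁ = 0) :
    (schurEmbedding A)ᵀ * gramianResidual A P H * schurEmbedding A =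
      gramianResidual (schurComplement₂₂ A) P.toBlocks₁₁ (H * schurEmbedding A) := by
  set S := schurEmbedding A
  have hPA := schurEmbedding_transpose_mul_mul hA hP₂₁
  have hP₁₁ : P.toBlocks₁₁ᵀ = P.toBlocks₁₁ := (hP.submatrix Sum.inl).eq
  have hAP : Sᵀ * (Aᵀ * P) * S = (Sᵀ * (P * A) * S)ᵀ := by
    simp only [Matrix.transpose_mul, Matrix.transpose_transpose, hP.eq, Matrix.mul_assoc]
  rw [gramianResidual, gramianResidual, Matrix.mul_sub, Matrix.sub_mul, Matrix.mul_add,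
    Matrix.add_mul, hAP, hPA, Matrix.transpose_mul, hP₁₁, Matrix.transpose_mul]
  simp only [Matrix.mul_assoc]

theorem PosSemidef.gramianResidual_schurComplement₂₂ [Fintype p] [PartialOrder R] [StarRing R]
    [TrivialStar R] {A P : Matrix (m ⊕ n) (m ⊕ n) R} {H : Matrix p (m ⊕ n) R}
    (hA : IsUnit A.toBlocks₂₂.det) (hP : P.IsSymm) (hP₂₁ : P.toBlocks₂₁ = 0)
    (hG : (gramianResidual A P H).PosSemidef) :
    (gramianResidual (schurComplement₂₂ A) P.toBlocks₁₁ (H * schurEmbedding A)).PosSemidef := by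
  rw [← schurEmbedding_transpose_mul_gramianResidual_mul H hA hP hP₂₁,
    ← conjTranspose_eq_transpose_of_trivial]
  exact hG.conjTranspose_mul_mul_same _

end SchurReduction

end Matrix

theorem truncated_observability_certificate_general
    (q p : ℕ)
    (Le : Matrix (Fin (q-1) ⊕ Fin 1) (Fin (q-1) ⊕ Fin 1) ℝ)
    (Hf : Matrix (Fin p) (Fin (q-1) ⊕ Fin 1) ℝ)
    -- the (2,2) entry of Le is a nonzero scalar
    (hL22 : Le (Sum.inr 0) (Sum.inr 0) ≠ 0)
    -- diagonal positive semidefinite Π^o satisfying the Gramian inequality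
    (Po : Matrix (Fin (q-1) ⊕ Fin 1) (Fin (q-1) ⊕ Fin 1) ℝ)
    (hPodiag : Po.IsDiag)
    (hPo : (Leᵀ * Po + Po * Le - Hfᵀ * Hf).PosSemidef)
    -- the Schur-reduced data and the truncated certificate
    (Lhat : Matrix (Fin (q-1)) (Fin (q-1)) ℝ)
    (hLhat : Lhat = Le.toBlocks₁₁ - Le.toBlocks₁₂ * (Le.toBlocks₂₂)⁻¹ * Le.toBlocks₂₁)
    (Hhat : Matrix (Fin p) (Fin (q-1)) ℝ)
    (hHhat : Hhat = Hf.submatrix id Sum.inl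
      - Hf.submatrix id Sum.inr * (Le.toBlocks₂₂)⁻¹ * Le.toBlocks₂₁)
    (Po1 : Matrix (Fin (q-1)) (Fin (q-1)) ℝ)
    (hPo1 : Po1 = Po.toBlocks₁₁) :
    (Lhatᵀ * Po1 + Po1 * Lhat - Hhatᵀ * Hhat).PosSemidef := by
  have hL₂₂ : IsUnit Le.toBlocks₂₂.det := by
    rwa [det_fin_one, isUnit_iff_ne_zero]
  have hPo₂₁ : Po.toBlocks₂₁ = 0 := by
    ext i j
    exact hPodiag Sum.inr_ne_inl
  have := hPo.gramianResidual_schurComplement₂₂ (H := Hf) hL₂₂ hPodiag.isSymm hPo₂₁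
  rwa [mul_schurEmbedding_eq, ← hHhat, schurComplement₂₂, ← hLhat, ← hPo1] at this

/-- truncation of a diagonal generalized edge observability Gramian
certificate remains a certificate for the one-step clustered (Schur-reduced) system. -/
theorem truncated_observability_certificate
    (q p : ℕ) (hq : 2 ≤ q)
    (Le : Matrix (Fin (q-1) ⊕ Fin 1) (Fin (q-1) ⊕ Fin 1) ℝ)
    (Hf : Matrix (Fin p) (Fin (q-1) ⊕ Fin 1) ℝ)
    -- the (2,2) entry of Le is a nonzero scalar
    (hL22 : Le (Sum.inr 0) (Sum.inr 0) ≠ 0)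
    -- diagonal positive semidefinite Π^o satisfying the Gramian inequality
    (Po : Matrix (Fin (q-1) ⊕ Fin 1) (Fin (q-1) ⊕ Fin 1) ℝ)
    (hPodiag : Po.IsDiag) (hPopsd : Po.PosSemidef)
    (hPo : (Leᵀ * Po + Po * Le - Hfᵀ * Hf).PosSemidef)
    -- the Schur-reduced data and the truncated certificate
    (Lhat : Matrix (Fin (q-1)) (Fin (q-1)) ℝ)
    (hLhat : Lhat = Le.toBlocks₁₁ - Le.toBlocks₁₂ * (Le.toBlocks₂₂)⁻¹ * Le.toBlocks₂₁)
    (Hhat : Matrix (Fin p) (Fin (q-1)) ℝ)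
    (hHhat : Hhat = Hf.submatrix id Sum.inl
      - Hf.submatrix id Sum.inr * (Le.toBlocks₂₂)⁻¹ * Le.toBlocks₂₁)
    (Po1 : Matrix (Fin (q-1)) (Fin (q-1)) ℝ)
    (hPo1 : Po1 = Po.toBlocks₁₁) :
    (Lhatᵀ * Po1 + Po1 * Lhat - Hhatᵀ * Hhat).PosSemidef :=
  truncated_observability_certificate_general q p Le Hf hL22 Po hPodiag hPo Lhat hLhat Hhat hHhat
    Po1 hPo1
end
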